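/- arXiv:1712.00711 — 6 statements merged into one kernel-verified Lean document; each statement's English description precedes it below -/
import Mathlib

section
/- Suppose θ* ∈ ℰ satisfies ‖θ*‖_ℰ ≤ 1/2, and let a ∈ (0,1], ε > 0 and k ∈ {1,…,d−1}. Then the following chain holds: min{aε, (1/2)√(μ_{k+1})} ≤ b_{k,2}(ℰ_{θ*} ∩ B(aε)) ≤ ω_k(ℰ_{θ*} ∩ B(aε)) ≤ (3/2)·ω_k(ℰ ∩ B(aε)) = (3/2)·min{aε, √(μ_{k+1})}. -/
open MeasureTheory ProbabilityTheory Metric Set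
open scoped ENNReal NNReal

noncomputable section

namespace EllipseTest

/-- Euclidean space ℝ^d. -/
abbrev E (d : ℕ) := EuclideanSpace ℝ (Fin d)

/-- Convert a plain function to a point of Euclidean space. -/
def toE (d : ℕ) (v : Fin d → ℝ) : E d := (WithLp.equiv 2 (Fin d → ℝ)).symm v

/-- Gaussian measure N(θ, σ² I_d). -/
def gauss (d : ℕ) (σ : ℝ) (θ : E d) : Measure (E d) :=
  (Measure.pi fun i : Fin d => gaussianReal (θ i) ((σ ^ 2).toNNReal)).map
    (MeasurableEquiv.toLp 2 (Fin d → ℝ))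

/-- A {0,1}-valued measurable test. -/
def IsTest (d : ℕ) (ψ : E d → ℝ) : Prop := Measurable ψ ∧ ∀ y, ψ y = 0 ∨ ψ y = 1

/-- Uniform testing error: type I error at θ* plus worst-case type II error over the
alternative {θ ∈ H1 : ‖θ - θ*‖ ≥ ε}. -/
def Err (d : ℕ) (σ : ℝ) (H1 : Set (E d)) (ψ : E d → ℝ) (θstar : E d) (ε : ℝ) : ℝ :=
  (∫ y, ψ y ∂ gauss d σ θstar) +
    sSup ((fun θ => ∫ y, (1 - ψ y) ∂ gauss d σ θ) '' {θ ∈ H1 | ε ≤ ‖θ - θstar‖})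

/-- The ellipse {θ : ∑ θ_i²/μ_i ≤ 1}; the parameters μ are indexed from 1. -/
def ellipse (d : ℕ) (μ : ℕ → ℝ) : Set (E d) := {θ | ∑ i, θ i ^ 2 / μ (i.1 + 1) ≤ 1}

/-- The ellipse norm ‖x‖_ℰ. -/
def ellNorm (d : ℕ) (μ : ℕ → ℝ) (x : E d) : ℝ := Real.sqrt (∑ i, x i ^ 2 / μ (i.1 + 1))

/-- The recentered ellipse ℰ_{θ*}. -/
def ellRe (d : ℕ) (μ : ℕ → ℝ) (θstar : E d) : Set (E d) := (fun θ => θ - θstar) '' ellipse d μ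

/-- Kolmogorov k-width of a set C: the smallest, over orthogonal projections onto
k-dimensional subspaces, worst-case distance of a point of C to its projection. -/
def kolWidth (d : ℕ) (k : ℕ) (C : Set (E d)) : ℝ :=
  sInf {x | ∃ S : Submodule ℝ (E d), Module.finrank ℝ S = k ∧
    x = sSup ((fun θ => ‖θ - (S.orthogonalProjectionOnto θ : E d)‖) '' C)}

/-- Bernstein k-width in ℓ₂ norm. -/
def bern2 (d k : ℕ) (C : Set (E d)) : ℝ :=
  sSup {r : ℝ | 0 ≤ r ∧ ∃ S : Submodule ℝ (E d), Module.finrank ℝ S = k + 1 ∧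
    ∀ u ∈ S, ‖u‖ ≤ r → u ∈ C}

/-- Bernstein k-width in ℓ∞ norm. -/
def bernInf (d k : ℕ) (C : Set (E d)) : ℝ :=
  sSup {r : ℝ | 0 ≤ r ∧ ∃ S : Submodule ℝ (E d), Module.finrank ℝ S = k + 1 ∧
    ∀ u ∈ S, (∀ i, |u i| ≤ r) → u ∈ C}

/-- Upper critical dimension k_u(ε, θ*, ℰ). -/
def kU (d : ℕ) (μ : ℕ → ℝ) (θstar : E d) (ε : ℝ) : ℕ :=
  sInf {k : ℕ | 1 ≤ k ∧ k ≤ d ∧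
    kolWidth d k (ellRe d μ θstar ∩ closedBall 0 ε) ≤ ε / Real.sqrt 2}

/-- Upper critical radius ε_u(θ*; ρ, ℰ). -/
def epsU (d : ℕ) (μ : ℕ → ℝ) (σ ρ : ℝ) (θstar : E d) : ℝ :=
  sInf {ε : ℝ | 0 < ε ∧ 8 / Real.sqrt ρ * σ ^ 2 * Real.sqrt (kU d μ θstar ε) / ε ≤ ε}

/-- Lower critical dimension k_ℓ(ε, θ*, ℰ) given constants a, b. -/
def kL (d : ℕ) (μ : ℕ → ℝ) (a b : ℝ) (θstar : E d) (ε : ℝ) : ℕ :=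
  sInf {k : ℕ | 1 ≤ k ∧ k ≤ d ∧
    kolWidth d k (ellRe d μ θstar ∩ closedBall 0 (a * ε)) ≤ 3 * b * ε}

/-- Lower critical radius ε_ℓ(θ*; ℰ). -/
def epsL (d : ℕ) (μ : ℕ → ℝ) (σ a b : ℝ) (θstar : E d) : ℝ :=
  sSup {ε : ℝ | 0 < ε ∧ ε ≤ 1 / 4 * σ ^ 2 * Real.sqrt (kL d μ a b θstar ε) / ε}

/-- The function Φ measuring proximity of θ* to the ellipse boundary. -/
def Phi (d : ℕ) (μ : ℕ → ℝ) (a : ℝ) (θstar : E d) (δ : ℝ) : ℝ :=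
  if ‖θstar‖ / a < δ then 1
  else min 1 (sInf {r : ℝ | 0 ≤ r ∧
    a ^ 2 * δ ^ 2 ≤ ∑ i, r ^ 2 / (r + μ (i.1 + 1)) ^ 2 * θstar i ^ 2})

/-- Φ⁻¹(x): the largest δ > 0 with Φ(δ) ≤ x (equal to ∞ if x ≥ 1). -/
def PhiInv (d : ℕ) (μ : ℕ → ℝ) (a : ℝ) (θstar : E d) (x : ℝ) : ℝ≥0∞ :=
  ⨆ δ ∈ {δ : ℝ | 0 < δ ∧ Phi d μ a θstar δ ≤ x}, ENNReal.ofReal δ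

/-- The local minimax testing radius ε_OPT(θ*; ρ, ℰ). -/
def epsOpt (d : ℕ) (μ : ℕ → ℝ) (σ ρ : ℝ) (θstar : E d) : ℝ :=
  sInf {ε : ℝ | 0 < ε ∧ ∃ ψ : E d → ℝ, IsTest d ψ ∧ Err d σ (ellipse d μ) ψ θstar ε ≤ ρ}

end EllipseTest


namespace Stmt5Aux
open EllipseTest Module Metric Set

variable {d : ℕ}

lemma normsq (x : E d) : ‖x‖ ^ 2 = ∑ i, x i ^ 2 := by
  rw [EuclideanSpace.norm_eq, Real.sq_sqrt (by positivity)]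
  simp [sq_abs]

lemma norm_sub_proj_le (S : Submodule ℝ (E d)) (θ v : E d) (hv : v ∈ S) :
    ‖θ - (S.orthogonalProjectionOnto θ : E d)‖ ≤ ‖θ - v‖ := by
  rw [← Submodule.starProjection_apply, Submodule.starProjection_minimal]
  exact ciInf_le ⟨0, by rintro x ⟨w, rfl⟩; positivity⟩ (⟨v, hv⟩ : S)

def coordSub (d m : ℕ) : Submodule ℝ (E d) where
  carrier := {x | ∀ i : Fin d, m ≤ (i : ℕ) → x i = 0}
  add_mem' := by intro a b ha hb i hi; simp [ha i hi, hb i hi]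
  zero_mem' := by intro i hi; rfl
  smul_mem' := by intro c x hx i hi; simp [hx i hi]

lemma mem_coordSub {m : ℕ} {x : E d} :
    x ∈ coordSub d m ↔ ∀ i : Fin d, m ≤ (i : ℕ) → x i = 0 := Iff.rfl

lemma sum_single (x : E d) : ∑ i, x i • (EuclideanSpace.single i (1:ℝ) : E d) = x := by
  simpa using (EuclideanSpace.basisFun (Fin d) ℝ).sum_repr x

lemma coordSub_eq_span (d m : ℕ) (h : m ≤ d) :
    coordSub d m = Submodule.span ℝ
      (Set.range fun j : Fin m => (EuclideanSpace.single (Fin.castLE h j) (1:ℝ) : E d)) := by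
  apply le_antisymm
  · intro x hx
    rw [← sum_single x]
    apply Submodule.sum_mem
    intro i _
    by_cases hi : (i : ℕ) < m
    · refine Submodule.smul_mem _ _ (Submodule.subset_span ⟨⟨i, hi⟩, ?_⟩)
      congr 1
    · rw [hx i (by omega)]; simp
  · rw [Submodule.span_le]
    rintro _ ⟨j, rfl⟩ i hi
    have hne : i ≠ Fin.castLE h j := by
      rintro rfl; simp at hi; omega
    simp [EuclideanSpace.single_apply, hne]

lemma coordSub_finrank (d m : ℕ) (h : m ≤ d) : finrank ℝ (coordSub d m) = m := by
  rw [coordSub_eq_span d m h]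
  have hon : Orthonormal ℝ fun j : Fin m =>
      (EuclideanSpace.single (Fin.castLE h j) (1:ℝ) : E d) :=
    (EuclideanSpace.orthonormal_single (𝕜 := ℝ) (ι := Fin d)).comp _ (Fin.castLE_injective h)
  rw [finrank_span_eq_card hon.linearIndependent, Fintype.card_fin]

lemma exists_norm_eq (T : Submodule ℝ (E d)) (hT : T ≠ ⊥) {r : ℝ} (hr : 0 ≤ r) :
    ∃ u ∈ T, ‖u‖ = r := by
  obtain ⟨w, hwT, hw0⟩ := Submodule.exists_mem_ne_zero_of_ne_bot hT
  have hw : ‖w‖ ≠ 0 := norm_ne_zero_iff.mpr hw0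
  refine ⟨(r / ‖w‖) • w, T.smul_mem _ hwT, ?_⟩
  rw [norm_smul, Real.norm_eq_abs, abs_div, abs_of_nonneg hr, abs_norm]
  field_simp

lemma exists_perp {k : ℕ} (S T : Submodule ℝ (E d)) (hS : finrank ℝ S = k)
    (hT : finrank ℝ T = k + 1) {r : ℝ} (hr : 0 ≤ r) :
    ∃ u, u ∈ T ∧ u ∈ Sᗮ ∧ ‖u‖ = r := by
  have hE : finrank ℝ (E d) = d := finrank_euclideanSpace_fin
  have h1 : finrank ℝ S + finrank ℝ Sᗮ = d := by
    rw [S.finrank_add_finrank_orthogonal, hE]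
  have h2 := Submodule.finrank_sup_add_finrank_inf_eq T Sᗮ
  have h3 : finrank ℝ ((T ⊔ Sᗮ : Submodule ℝ (E d)) : Submodule ℝ (E d)) ≤ d :=
    (Submodule.finrank_le _).trans hE.le
  have h4 : T ⊓ Sᗮ ≠ ⊥ := by
    intro hbot
    rw [hbot, finrank_bot] at h2
    omega
  obtain ⟨u, hu, hnorm⟩ := exists_norm_eq (T ⊓ Sᗮ) h4 hr
  exact ⟨u, hu.1, hu.2, hnorm⟩

/-! ### ellNorm lemmas -/

def phiMap (μ : ℕ → ℝ) (x : E d) : E d := toE d fun i => x i / Real.sqrt (μ (i.1 + 1))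

lemma phiMap_apply (μ : ℕ → ℝ) (x : E d) (i : Fin d) :
    phiMap μ x i = x i / Real.sqrt (μ (i.1 + 1)) := rfl

lemma phiMap_sub (μ : ℕ → ℝ) (x y : E d) : phiMap μ (x - y) = phiMap μ x - phiMap μ y := by
  ext i
  simp [phiMap_apply, sub_div]

lemma phiMap_add (μ : ℕ → ℝ) (x y : E d) : phiMap μ (x + y) = phiMap μ x + phiMap μ y := by
  ext i
  simp [phiMap_apply, add_div]

lemma phiMap_smul (μ : ℕ → ℝ) (c : ℝ) (x : E d) : phiMap μ (c • x) = c • phiMap μ x := by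
  ext i
  simp [phiMap_apply, mul_div_assoc]

lemma ellNorm_eq_norm (μ : ℕ → ℝ) (hμ : ∀ i : Fin d, 0 < μ (i.1 + 1)) (x : E d) :
    ellNorm d μ x = ‖phiMap μ x‖ := by
  rw [EuclideanSpace.norm_eq]
  unfold ellNorm
  congr 1
  refine Finset.sum_congr rfl fun i _ => ?_
  rw [Real.norm_eq_abs, sq_abs, phiMap_apply, div_pow, Real.sq_sqrt (hμ i).le]

lemma ellNorm_add_le (μ : ℕ → ℝ) (hμ : ∀ i : Fin d, 0 < μ (i.1 + 1)) (x y : E d) :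
    ellNorm d μ (x + y) ≤ ellNorm d μ x + ellNorm d μ y := by
  rw [ellNorm_eq_norm μ hμ, ellNorm_eq_norm μ hμ, ellNorm_eq_norm μ hμ, phiMap_add]
  exact norm_add_le _ _

lemma ellNorm_sub_le (μ : ℕ → ℝ) (hμ : ∀ i : Fin d, 0 < μ (i.1 + 1)) (x y : E d) :
    ellNorm d μ (x - y) ≤ ellNorm d μ x + ellNorm d μ y := by
  rw [ellNorm_eq_norm μ hμ, ellNorm_eq_norm μ hμ, ellNorm_eq_norm μ hμ, phiMap_sub]
  exact norm_sub_le _ _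

lemma ellNorm_smul (μ : ℕ → ℝ) (hμ : ∀ i : Fin d, 0 < μ (i.1 + 1)) (c : ℝ) (x : E d) :
    ellNorm d μ (c • x) = |c| * ellNorm d μ x := by
  rw [ellNorm_eq_norm μ hμ, ellNorm_eq_norm μ hμ, phiMap_smul, norm_smul, Real.norm_eq_abs]

lemma mem_ellipse_iff (μ : ℕ → ℝ) (hμ : ∀ i : Fin d, 0 < μ (i.1 + 1)) (θ : E d) :
    θ ∈ ellipse d μ ↔ ellNorm d μ θ ≤ 1 := by
  rw [ellipse, Set.mem_setOf_eq, ellNorm, Real.sqrt_le_one]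

lemma ellNorm_le_of_support (μ : ℕ → ℝ) (hμ : ∀ i : Fin d, 0 < μ (i.1 + 1)) {m : ℕ}
    (hμm : 0 < μ m) (hmono : ∀ i : Fin d, (i : ℕ) < m → μ m ≤ μ (i.1 + 1))
    {u : E d} (hu : ∀ i : Fin d, m ≤ (i : ℕ) → u i = 0) :
    ellNorm d μ u ≤ ‖u‖ / Real.sqrt (μ m) := by
  have key : ∑ i, u i ^ 2 / μ (i.1 + 1) ≤ (∑ i, u i ^ 2) / μ m := by
    rw [Finset.sum_div]
    refine Finset.sum_le_sum fun i _ => ?_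
    by_cases hi : (i : ℕ) < m
    · exact div_le_div_of_nonneg_left (sq_nonneg _) hμm (hmono i hi)
    · rw [hu i (by omega)]
      simp
  calc ellNorm d μ u = Real.sqrt (∑ i, u i ^ 2 / μ (i.1 + 1)) := rfl
    _ ≤ Real.sqrt ((∑ i, u i ^ 2) / μ m) := Real.sqrt_le_sqrt key
    _ = ‖u‖ / Real.sqrt (μ m) := by
        rw [← normsq, Real.sqrt_div (by positivity), Real.sqrt_sq (norm_nonneg _)]

end Stmt5Aux

set_option maxHeartbeats 1000000 in
open EllipseTest Stmt5Aux Module in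
/-- Lemma 2 (chain of width inequalities): for ‖θ*‖_ℰ ≤ 1/2, a ∈ (0,1], ε > 0 and
1 ≤ k ≤ d−1,
min{aε, (1/2)√μ_{k+1}} ≤ b_{k,2}(ℰ_{θ*}∩B(aε)) ≤ ω_k(ℰ_{θ*}∩B(aε))
  ≤ (3/2)ω_k(ℰ∩B(aε)) = (3/2)min{aε, √μ_{k+1}}. -/
theorem stmt5 (d : ℕ) (hd : 1 ≤ d) (μ : ℕ → ℝ)
    (hμpos : ∀ i, 1 ≤ i → i ≤ d → 0 < μ i)
    (hμmono : ∀ i j, 1 ≤ i → i ≤ j → j ≤ d → μ j ≤ μ i)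
    (θstar : E d) (hθstar : θstar ∈ ellipse d μ) (hθnorm : ellNorm d μ θstar ≤ 1 / 2)
    (a : ℝ) (ha : a ∈ Set.Ioc (0 : ℝ) 1) (ε : ℝ) (hε : 0 < ε)
    (k : ℕ) (hk1 : 1 ≤ k) (hkd : k ≤ d - 1) :
    min (a * ε) (Real.sqrt (μ (k + 1)) / 2)
        ≤ bern2 d k (ellRe d μ θstar ∩ closedBall 0 (a * ε)) ∧
      bern2 d k (ellRe d μ θstar ∩ closedBall 0 (a * ε))
        ≤ kolWidth d k (ellRe d μ θstar ∩ closedBall 0 (a * ε)) ∧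
      kolWidth d k (ellRe d μ θstar ∩ closedBall 0 (a * ε))
        ≤ 3 / 2 * kolWidth d k (ellipse d μ ∩ closedBall 0 (a * ε)) ∧
      kolWidth d k (ellipse d μ ∩ closedBall 0 (a * ε))
        = min (a * ε) (Real.sqrt (μ (k + 1))) := by
  obtain ⟨ha0, ha1⟩ := ha
  have hae : 0 < a * ε := mul_pos ha0 hε
  have hk1d : k + 1 ≤ d := by omega
  have hkd' : k ≤ d := by omega
  have hμ : ∀ i : Fin d, 0 < μ (i.1 + 1) := by
    intro i
    exact hμpos _ (by omega) (by have := i.isLt; omega)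
  have hμk : 0 < μ (k + 1) := hμpos _ (by omega) hk1d
  have hsμ : 0 < Real.sqrt (μ (k + 1)) := Real.sqrt_pos.mpr hμk
  set R : ℝ := a * ε with hR
  set C : Set (E d) := ellipse d μ ∩ closedBall 0 R with hC
  set C' : Set (E d) := ellRe d μ θstar ∩ closedBall 0 R with hC'
  have hellRe : ∀ u : E d, u ∈ ellRe d μ θstar ↔ u + θstar ∈ ellipse d μ := by
    intro u
    constructor
    · rintro ⟨θ, hθ, rfl⟩
      simpa using hθ
    · intro h
      exact ⟨u + θstar, h, add_sub_cancel_right u θstar⟩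
  have hCsub : C ⊆ closedBall 0 R := Set.inter_subset_right
  have hC'sub : C' ⊆ closedBall 0 R := Set.inter_subset_right
  have h0C : (0 : E d) ∈ C := by
    refine ⟨by simp [ellipse], mem_closedBall_zero_iff.mpr (by simp [hae.le])⟩
  have h0C' : (0 : E d) ∈ C' := by
    refine ⟨(hellRe 0).mpr (by simpa using hθstar), mem_closedBall_zero_iff.mpr (by simp [hae.le])⟩
  -- boundedness of the distance images
  have hDB : ∀ (B : Set (E d)), B ⊆ closedBall 0 R → ∀ S : Submodule ℝ (E d),
      BddAbove ((fun θ => ‖θ - (S.orthogonalProjectionOnto θ : E d)‖) '' B) := by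
    intro B hB S
    refine ⟨R, ?_⟩
    rintro x ⟨θ, hθ, rfl⟩
    calc ‖θ - (S.orthogonalProjectionOnto θ : E d)‖ ≤ ‖θ - 0‖ := norm_sub_proj_le S θ 0 S.zero_mem
      _ = ‖θ‖ := by simp
      _ ≤ R := mem_closedBall_zero_iff.mp (hB hθ)
  have hWbdd : ∀ (B : Set (E d)), (0 : E d) ∈ B → B ⊆ closedBall 0 R →
      BddBelow {x | ∃ S : Submodule ℝ (E d), Module.finrank ℝ S = k ∧
        x = sSup ((fun θ => ‖θ - (S.orthogonalProjectionOnto θ : E d)‖) '' B)} := by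
    intro B h0 hB
    refine ⟨0, ?_⟩
    rintro x ⟨S, hS, rfl⟩
    exact le_csSup (hDB B hB S) ⟨0, h0, by simp⟩
  -- Part 4
  have hP4 : kolWidth d k C = min R (Real.sqrt (μ (k + 1))) := by
    apply le_antisymm
    · -- upper bound via coordinate projection
      unfold kolWidth
      refine le_trans (csInf_le (hWbdd C h0C hCsub)
        ⟨coordSub d k, coordSub_finrank d k hkd', rfl⟩) ?_
      refine csSup_le ⟨_, ⟨0, h0C, rfl⟩⟩ ?_
      rintro x ⟨θ, hθC, rfl⟩
      set v : E d := toE d (fun i => if (i : ℕ) < k then θ i else 0) with hv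
      have hvS : v ∈ coordSub d k := fun i hi => if_neg (by omega)
      have hsq : ‖θ - v‖ ^ 2 = ∑ i, (if i.1 < k then 0 else θ i ^ 2) := by
        rw [normsq]
        refine Finset.sum_congr rfl fun i _ => ?_
        have hvi : v i = if i.1 < k then θ i else 0 := rfl
        have : (θ - v) i = θ i - v i := rfl
        by_cases hi : (i : ℕ) < k <;> simp [this, hvi, hi]
      have hb1 : ‖θ - v‖ ^ 2 ≤ R ^ 2 := by
        rw [hsq]
        have h1 : ∑ i, (if i.1 < k then 0 else θ i ^ 2) ≤ ∑ i, θ i ^ 2 := by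
          refine Finset.sum_le_sum fun i _ => ?_
          by_cases hi : (i : ℕ) < k <;> simp [hi, sq_nonneg]
        have h2 : ‖θ‖ ≤ R := mem_closedBall_zero_iff.mp hθC.2
        have h3 := normsq θ
        nlinarith [norm_nonneg θ]
      have hb2 : ‖θ - v‖ ^ 2 ≤ μ (k + 1) := by
        rw [hsq]
        have h1 : ∑ i, (if i.1 < k then 0 else θ i ^ 2)
            ≤ ∑ i, θ i ^ 2 / μ (i.1 + 1) * μ (k + 1) := by
          refine Finset.sum_le_sum fun i _ => ?_
          by_cases hi : (i : ℕ) < k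
          · simp only [hi, if_true]
            exact mul_nonneg (div_nonneg (sq_nonneg _) (hμ i).le) hμk.le
          · simp only [hi, if_false]
            have hmono : μ (i.1 + 1) ≤ μ (k + 1) :=
              hμmono (k + 1) (i.1 + 1) (by omega) (by omega) (by have := i.isLt; omega)
            calc θ i ^ 2 = θ i ^ 2 / μ (i.1 + 1) * μ (i.1 + 1) :=
                  (div_mul_cancel₀ _ (hμ i).ne').symm
              _ ≤ θ i ^ 2 / μ (i.1 + 1) * μ (k + 1) :=
                  mul_le_mul_of_nonneg_left hmono (div_nonneg (sq_nonneg _) (hμ i).le)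
        have h2 : ∑ i, θ i ^ 2 / μ (i.1 + 1) * μ (k + 1)
            = (∑ i, θ i ^ 2 / μ (i.1 + 1)) * μ (k + 1) := by
          rw [Finset.sum_mul]
        have h3 : ∑ i, θ i ^ 2 / μ (i.1 + 1) ≤ 1 := hθC.1
        nlinarith
      have hnn := norm_nonneg (θ - v)
      have hfin : ‖θ - v‖ ≤ min R (Real.sqrt (μ (k + 1))) := by
        refine le_min ?_ ?_
        · nlinarith
        · exact (Real.le_sqrt hnn hμk.le).mpr hb2
      exact (norm_sub_proj_le (coordSub d k) θ v hvS).trans hfin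
    · -- lower bound: every projection misses by at least min R √μ
      set m : ℝ := min R (Real.sqrt (μ (k + 1))) with hm
      have hm0 : 0 ≤ m := le_min hae.le hsμ.le
      unfold kolWidth
      refine le_csInf ⟨_, coordSub d k, coordSub_finrank d k hkd', rfl⟩ ?_
      rintro x ⟨S, hS, rfl⟩
      obtain ⟨u, huT, huP, hun⟩ :=
        exists_perp S (coordSub d (k + 1)) hS (coordSub_finrank d (k + 1) hk1d) hm0
      have hsup : ∀ i : Fin d, k + 1 ≤ (i : ℕ) → u i = 0 := huT
      have huE : u ∈ ellipse d μ := by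
        rw [mem_ellipse_iff μ hμ]
        have h1 : ellNorm d μ u ≤ ‖u‖ / Real.sqrt (μ (k + 1)) :=
          ellNorm_le_of_support μ hμ hμk
            (fun i hi => hμmono (i.1 + 1) (k + 1) (by omega) (by omega) hk1d) hsup
        have h2 : ‖u‖ ≤ Real.sqrt (μ (k + 1)) := hun.le.trans (min_le_right _ _)
        refine h1.trans ?_
        rw [div_le_one hsμ]
        exact h2
      have huC : u ∈ C :=
        ⟨huE, mem_closedBall_zero_iff.mpr (hun.le.trans (min_le_left _ _))⟩
      have hproj : (S.orthogonalProjectionOnto u : E d) = 0 := by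
        rw [Submodule.orthogonalProjectionOnto_apply_of_mem_orthogonal huP]
        rfl
      refine le_csSup (hDB C hCsub S) ⟨u, huC, ?_⟩
      simp only [hproj, sub_zero]
      exact hun
  -- Part 2
  have hP2 : bern2 d k C' ≤ kolWidth d k C' := by
    unfold bern2
    refine csSup_le ⟨0, le_refl 0, coordSub d (k + 1), coordSub_finrank d (k + 1) hk1d,
      fun u _ hu => by rw [norm_le_zero_iff.mp hu]; exact h0C'⟩ ?_
    rintro r ⟨hr0, T, hT, hTC⟩
    unfold kolWidth
    refine le_csInf ⟨_, coordSub d k, coordSub_finrank d k hkd', rfl⟩ ?_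
    rintro x ⟨S, hS, rfl⟩
    obtain ⟨u, huT, huP, hun⟩ := exists_perp S T hS hT hr0
    have huC : u ∈ C' := hTC u huT hun.le
    have hproj : (S.orthogonalProjectionOnto u : E d) = 0 := by
      rw [Submodule.orthogonalProjectionOnto_apply_of_mem_orthogonal huP]
      rfl
    refine le_csSup (hDB C' hC'sub S) ⟨u, huC, ?_⟩
    simp only [hproj, sub_zero]
    exact hun
  -- Part 1
  have hP1 : min R (Real.sqrt (μ (k + 1)) / 2) ≤ bern2 d k C' := by
    have hbdd : BddAbove {r : ℝ | 0 ≤ r ∧ ∃ S : Submodule ℝ (E d),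
        Module.finrank ℝ S = k + 1 ∧ ∀ u ∈ S, ‖u‖ ≤ r → u ∈ C'} := by
      refine ⟨R, ?_⟩
      rintro r ⟨hr0, T, hT, hTC⟩
      have hTne : T ≠ ⊥ := by
        intro h
        rw [h, finrank_bot] at hT
        omega
      obtain ⟨u, huT, hun⟩ := exists_norm_eq T hTne hr0
      have h1 := mem_closedBall_zero_iff.mp (hTC u huT hun.le).2
      rw [hun] at h1
      exact h1
    unfold bern2
    refine le_csSup hbdd ⟨le_min hae.le (by positivity),
      coordSub d (k + 1), coordSub_finrank d (k + 1) hk1d, ?_⟩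
    intro u huT hule
    have hsup : ∀ i : Fin d, k + 1 ≤ (i : ℕ) → u i = 0 := huT
    refine ⟨(hellRe u).mpr ?_, mem_closedBall_zero_iff.mpr (hule.trans (min_le_left _ _))⟩
    rw [mem_ellipse_iff μ hμ]
    have h1 : ellNorm d μ (u + θstar) ≤ ellNorm d μ u + ellNorm d μ θstar :=
      ellNorm_add_le μ hμ u θstar
    have h2 : ellNorm d μ u ≤ ‖u‖ / Real.sqrt (μ (k + 1)) :=
      ellNorm_le_of_support μ hμ hμk
        (fun i hi => hμmono (i.1 + 1) (k + 1) (by omega) (by omega) hk1d) hsup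
    have h3 : ‖u‖ ≤ Real.sqrt (μ (k + 1)) / 2 := hule.trans (min_le_right _ _)
    have h4 : ‖u‖ / Real.sqrt (μ (k + 1)) ≤ 1 / 2 := by
      rw [div_le_div_iff₀ hsμ (by norm_num)]
      linarith
    linarith
  -- Part 3
  have hP3 : kolWidth d k C' ≤ 3 / 2 * kolWidth d k C := by
    have key : ∀ x ∈ {x | ∃ S : Submodule ℝ (E d), Module.finrank ℝ S = k ∧
        x = sSup ((fun θ => ‖θ - (S.orthogonalProjectionOnto θ : E d)‖) '' C)},
        kolWidth d k C' ≤ 3 / 2 * x := by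
      rintro x ⟨S, hS, rfl⟩
      unfold kolWidth
      refine le_trans (csInf_le (hWbdd C' h0C' hC'sub) ⟨S, hS, rfl⟩) ?_
      refine csSup_le ⟨_, ⟨0, h0C', rfl⟩⟩ ?_
      rintro y ⟨v, hvC', rfl⟩
      obtain ⟨hvE, hvB⟩ := hvC'
      obtain ⟨θ, hθE, rfl⟩ := hvE
      show ‖(θ - θstar) - (S.orthogonalProjectionOnto (θ - θstar) : E d)‖
        ≤ 3 / 2 * sSup ((fun θ => ‖θ - (S.orthogonalProjectionOnto θ : E d)‖) '' C)
      have hv1 : ellNorm d μ (θ - θstar) ≤ 3 / 2 := by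
        have := ellNorm_sub_le μ hμ θ θstar
        have h2 := (mem_ellipse_iff μ hμ θ).mp hθE
        have h3 : ellNorm d μ θstar ≤ 1 / 2 := hθnorm
        linarith
      have hvnorm : ‖θ - θstar‖ ≤ R := mem_closedBall_zero_iff.mp hvB
      have hw : ((2 : ℝ) / 3) • (θ - θstar) ∈ C := by
        constructor
        · rw [mem_ellipse_iff μ hμ, ellNorm_smul μ hμ]
          rw [abs_of_nonneg (by norm_num : (0:ℝ) ≤ 2 / 3)]
          linarith
        · refine mem_closedBall_zero_iff.mpr ?_
          rw [norm_smul, Real.norm_eq_abs, abs_of_nonneg (by norm_num : (0:ℝ) ≤ 2 / 3)]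
          nlinarith [norm_nonneg (θ - θstar)]
      have hmem : ‖((2 : ℝ) / 3) • (θ - θstar) -
            (S.orthogonalProjectionOnto (((2 : ℝ) / 3) • (θ - θstar)) : E d)‖
          ≤ sSup ((fun θ => ‖θ - (S.orthogonalProjectionOnto θ : E d)‖) '' C) :=
        le_csSup (hDB C hCsub S) ⟨_, hw, rfl⟩
      have hlin : (S.orthogonalProjectionOnto (((2 : ℝ) / 3) • (θ - θstar)) : E d)
          = ((2 : ℝ) / 3) • (S.orthogonalProjectionOnto (θ - θstar) : E d) := by
        rw [_root_.map_smul]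
        rfl
      have heq : ‖((2 : ℝ) / 3) • (θ - θstar)
            - (S.orthogonalProjectionOnto (((2 : ℝ) / 3) • (θ - θstar)) : E d)‖
          = 2 / 3 * ‖(θ - θstar) - (S.orthogonalProjectionOnto (θ - θstar) : E d)‖ := by
        rw [hlin, ← smul_sub, norm_smul, Real.norm_eq_abs,
          abs_of_nonneg (by norm_num : (0:ℝ) ≤ 2 / 3)]
      rw [heq] at hmem
      linarith
    have h23 : 2 / 3 * kolWidth d k C' ≤ kolWidth d k C := by
      have key2 : ∀ x ∈ {x | ∃ S : Submodule ℝ (E d), Module.finrank ℝ S = k ∧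
          x = sSup ((fun θ => ‖θ - (S.orthogonalProjectionOnto θ : E d)‖) '' C)},
          2 / 3 * kolWidth d k C' ≤ x := by
        intro x hx
        have := key x hx
        linarith
      exact le_csInf ⟨_, coordSub d k, coordSub_finrank d k hkd', rfl⟩ key2
    linarith
  exact ⟨hP1, hP2, hP3, hP4⟩
end
end

section
/- Let t ≥ 81 be an integer, set s := ⌊√t⌋, and let σ > 0 and λ ≥ 0. Let F be a finite set of cardinality t, and suppose that to each subset S ⊆ F with |S| = s there is associated a vector Δ^S ∈ ℝ^d such that ⟨Δ^S, Δ^{S'}⟩ ≤ σ²·(λ/s)·|S ∩ S'| for all size-s subsets S, S' of F. Let Q be the uniform distribution over {Δ^S : S ⊆ F, |S| = s}. Then E_{η,η'}[exp(⟨η, η'⟩/σ²)] ≤ exp( −(1 − 1/√t)² + exp((2 + λ)/(√t − 1)) ), where η, η' are drawn i.i.d. from Q. -/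
open MeasureTheory ProbabilityTheory Metric Set
open scoped ENNReal NNReal

noncomputable section

private lemma sum_pow_card_powerset {ι : Type*} [DecidableEq ι] (A : Finset ι) (y : ℝ) :
    ∑ B ∈ A.powerset, y ^ B.card = (1 + y) ^ A.card := by
  rw [Finset.sum_powerset_apply_card, show (1+y)=(y+1) by ring, add_pow]
  simp [nsmul_eq_mul, mul_comm]

private lemma card_filter_superset {ι : Type*} [DecidableEq ι] (F B : Finset ι) (hB : B ⊆ F)
    (s : ℕ) (hBs : B.card ≤ s) :
    ((F.powersetCard s).filter (fun S' => B ⊆ S')).card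
      = (F.card - B.card).choose (s - B.card) := by
  rw [← Finset.card_sdiff_of_subset hB, ← Finset.card_powersetCard]
  apply Finset.card_bij' (fun S' _ => S' \ B) (fun T _ => T ∪ B)
  · intro S' hS'
    simp only [Finset.mem_filter, Finset.mem_powersetCard] at hS' ⊢
    exact ⟨Finset.sdiff_subset_sdiff hS'.1.1 le_rfl,
      by rw [Finset.card_sdiff_of_subset hS'.2, hS'.1.2]⟩
  · intro T hT
    simp only [Finset.mem_filter, Finset.mem_powersetCard] at hT ⊢
    have hdisj : Disjoint T B := Finset.disjoint_of_subset_left hT.1 Finset.sdiff_disjoint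
    have hBF : B.card ≤ F.card := Finset.card_le_card hB
    refine ⟨⟨Finset.union_subset (hT.1.trans Finset.sdiff_subset) hB, ?_⟩,
      Finset.subset_union_right⟩
    rw [Finset.card_union_of_disjoint hdisj, hT.2]
    omega
  · intro S' hS'
    simp only [Finset.mem_filter] at hS'
    exact Finset.sdiff_union_of_subset hS'.2
  · intro T hT
    simp only [Finset.mem_powersetCard] at hT
    have hdisj : Disjoint T B := Finset.disjoint_of_subset_left hT.1 Finset.sdiff_disjoint
    exact Finset.union_sdiff_cancel_right hdisj

private lemma choose_prod_le {t s j : ℕ} (hst : s ≤ t) (hjs : j ≤ s) :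
    s.choose j * (t - j).choose (s - j) * t ^ j ≤ t.choose s * s.choose j * s ^ j := by
  have key : s.choose j * t ^ j ≤ t.choose j * s ^ j := by
    have h1 : Nat.descFactorial s j * t ^ j ≤ Nat.descFactorial t j * s ^ j := by
      have e1 : t ^ j = ∏ _i ∈ Finset.range j, t := by simp
      have e2 : s ^ j = ∏ _i ∈ Finset.range j, s := by simp
      rw [Nat.descFactorial_eq_prod_range, Nat.descFactorial_eq_prod_range, e1, e2,
        ← Finset.prod_mul_distrib, ← Finset.prod_mul_distrib]
      apply Finset.prod_le_prod'
      intro i _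
      calc (s - i) * t = s * t - i * t := Nat.sub_mul _ _ _
        _ ≤ s * t - i * s := Nat.sub_le_sub_left (Nat.mul_le_mul_left i hst) _
        _ = (t - i) * s := by rw [Nat.sub_mul, Nat.mul_comm s t]
    rw [Nat.descFactorial_eq_factorial_mul_choose, Nat.descFactorial_eq_factorial_mul_choose]
      at h1
    have h2 : Nat.factorial j * (s.choose j * t ^ j) ≤ Nat.factorial j * (t.choose j * s ^ j) := by
      rw [← Nat.mul_assoc, ← Nat.mul_assoc]; exact h1
    exact Nat.le_of_mul_le_mul_left h2 (Nat.factorial_pos j)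
  calc s.choose j * (t - j).choose (s - j) * t ^ j
      = (s.choose j * t ^ j) * (t - j).choose (s - j) := by ring
    _ ≤ (t.choose j * s ^ j) * (t - j).choose (s - j) := Nat.mul_le_mul_right _ key
    _ = (t.choose j * (t - j).choose (s - j)) * s ^ j := by ring
    _ = (t.choose s * s.choose j) * s ^ j := by rw [← Nat.choose_mul (n := t) hjs]
    _ = t.choose s * s.choose j * s ^ j := by ring

private lemma key_sum_bound {ι : Type*} [DecidableEq ι] (F : Finset ι) (t s : ℕ)
    (hF : F.card = t) (hst : s ≤ t) (htpos : 0 < t) (S : Finset ι)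
    (hS : S ∈ F.powersetCard s) (y : ℝ) (hy : 0 ≤ y) :
    ∑ S' ∈ F.powersetCard s, (1 + y) ^ (S ∩ S').card
      ≤ (t.choose s : ℝ) * (1 + s * y / t) ^ s := by
  obtain ⟨hSF, hScard⟩ := Finset.mem_powersetCard.mp hS
  have htR : (0:ℝ) < t := by exact_mod_cast htpos
  have step1 : ∑ S' ∈ F.powersetCard s, (1 + y) ^ (S ∩ S').card
      = ∑ B ∈ S.powerset,
          ((((F.powersetCard s).filter (fun S' => B ⊆ S')).card : ℝ) * y ^ B.card) := by
    calc ∑ S' ∈ F.powersetCard s, (1 + y) ^ (S ∩ S').card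
        = ∑ S' ∈ F.powersetCard s, ∑ B ∈ (S ∩ S').powerset, y ^ B.card := by
          refine Finset.sum_congr rfl fun S' _ => ?_
          rw [sum_pow_card_powerset]
      _ = ∑ S' ∈ F.powersetCard s, ∑ B ∈ S.powerset, (if B ⊆ S' then y ^ B.card else 0) := by
          refine Finset.sum_congr rfl fun S' _ => ?_
          rw [← Finset.sum_filter]
          refine Finset.sum_congr ?_ fun _ _ => rfl
          ext B
          simp only [Finset.mem_powerset, Finset.mem_filter, Finset.subset_inter_iff]
      _ = ∑ B ∈ S.powerset, ∑ S' ∈ F.powersetCard s, (if B ⊆ S' then y ^ B.card else 0) :=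
          Finset.sum_comm
      _ = _ := by
          refine Finset.sum_congr rfl fun B _ => ?_
          rw [← Finset.sum_filter, Finset.sum_const, nsmul_eq_mul]
  rw [step1]
  have step2 : ∀ B ∈ S.powerset,
      ((((F.powersetCard s).filter (fun S' => B ⊆ S')).card : ℝ) * y ^ B.card)
        = (fun j => ((t - j).choose (s - j) : ℝ) * y ^ j) B.card := by
    intro B hB
    rw [card_filter_superset F B ((Finset.mem_powerset.mp hB).trans hSF) s
      (hScard ▸ Finset.card_le_card (Finset.mem_powerset.mp hB)), hF]
  rw [Finset.sum_congr rfl step2,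
    Finset.sum_powerset_apply_card (fun j => ((t - j).choose (s - j) : ℝ) * y ^ j), hScard]
  have hbound : ∀ j ∈ Finset.range (s + 1),
      s.choose j • (((t - j).choose (s - j) : ℝ) * y ^ j)
        ≤ (t.choose s : ℝ) * ((s * y / t) ^ j * 1 ^ (s - j) * s.choose j) := by
    intro j hj
    have hjs : j ≤ s := Nat.lt_succ_iff.mp (Finset.mem_range.mp hj)
    have hcast : (s.choose j : ℝ) * ((t - j).choose (s - j)) * t ^ j
        ≤ (t.choose s : ℝ) * s.choose j * s ^ j := by exact_mod_cast choose_prod_le hst hjs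
    have h2 := mul_le_mul_of_nonneg_right hcast (pow_nonneg hy j)
    rw [nsmul_eq_mul]
    have e1 : (s.choose j : ℝ) * (((t - j).choose (s - j) : ℝ) * y ^ j)
        = ((s.choose j : ℝ) * ((t - j).choose (s - j)) * t ^ j * y ^ j) / t ^ j := by
      field_simp
    have e2 : (t.choose s : ℝ) * ((s * y / t) ^ j * 1 ^ (s - j) * s.choose j)
        = ((t.choose s : ℝ) * s.choose j * s ^ j * y ^ j) / t ^ j := by
      rw [one_pow, div_pow, mul_pow]
      field_simp
    rw [e1, e2]
    exact (div_le_div_iff_of_pos_right (by positivity)).mpr h2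
  calc ∑ j ∈ Finset.range (s + 1), s.choose j • (((t - j).choose (s - j) : ℝ) * y ^ j)
      ≤ ∑ j ∈ Finset.range (s + 1),
          (t.choose s : ℝ) * ((s * y / t) ^ j * 1 ^ (s - j) * s.choose j) :=
        Finset.sum_le_sum hbound
    _ = (t.choose s : ℝ) * (s * y / t + 1) ^ s := by
        rw [← Finset.mul_sum, add_pow]
    _ = (t.choose s : ℝ) * (1 + s * y / t) ^ s := by ring

open EllipseTest in
/-- Lemma 6: for t ≥ 81, s = ⌊√t⌋, and vectors Δ^S indexed by size-s subsets of a
t-element set F with ⟨Δ^S, Δ^{S'}⟩ ≤ σ²(λ/s)|S ∩ S'|, the χ²-type quantity for the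
uniform distribution over {Δ^S} is bounded as
E exp(⟨η,η'⟩/σ²) ≤ exp(−(1−1/√t)² + exp((2+λ)/(√t−1))). -/
theorem stmt9 (d : ℕ) (t : ℕ) (ht : 81 ≤ t) (s : ℕ) (hs : s = Nat.sqrt t)
    (σ : ℝ) (hσ : 0 < σ) (lam : ℝ) (hlam : 0 ≤ lam)
    (ι : Type) [DecidableEq ι] (F : Finset ι) (hF : F.card = t)
    (Δ : Finset ι → E d)
    (hinner : ∀ S ∈ F.powersetCard s, ∀ S' ∈ F.powersetCard s,
      (inner ℝ (Δ S) (Δ S') : ℝ) ≤ σ ^ 2 * (lam / s) * ((S ∩ S').card : ℝ)) :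
    ((F.powersetCard s).card : ℝ)⁻¹ ^ 2 *
        ∑ S ∈ F.powersetCard s, ∑ S' ∈ F.powersetCard s,
          Real.exp ((inner ℝ (Δ S) (Δ S') : ℝ) / σ ^ 2)
      ≤ Real.exp (-(1 - 1 / Real.sqrt t) ^ 2
          + Real.exp ((2 + lam) / (Real.sqrt t - 1))) := by
  -- basic numerics
  have hs9 : 9 ≤ s := by
    rw [hs]; exact Nat.le_sqrt.mpr (by omega)
  have hst : s ≤ t := hs ▸ Nat.sqrt_le_self t
  have htpos : 0 < t := by omega
  have htR : (0:ℝ) < t := by exact_mod_cast htpos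
  have hsR : (9:ℝ) ≤ s := by exact_mod_cast hs9
  have hsqrt9 : (9:ℝ) ≤ Real.sqrt t := by
    have h81 : (81:ℝ) ≤ t := by exact_mod_cast ht
    have := Real.sqrt_le_sqrt h81
    rwa [show Real.sqrt 81 = 9 by
      rw [show (81:ℝ) = 9^2 by norm_num, Real.sqrt_sq (by norm_num)]] at this
  have hsqrtpos : (0:ℝ) < Real.sqrt t - 1 := by linarith
  have hsub1 : Real.sqrt t - 1 ≤ s := by
    have hnat : t < (s + 1) ^ 2 := hs ▸ Nat.lt_succ_sqrt' t
    have hR : (t:ℝ) < ((s:ℝ) + 1) ^ 2 := by exact_mod_cast hnat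
    have h2 := Real.sqrt_le_sqrt hR.le
    rw [Real.sqrt_sq (by positivity : (0:ℝ) ≤ (s:ℝ) + 1)] at h2
    linarith
  have hs2t : (s:ℝ)^2 ≤ t := by exact_mod_cast (hs ▸ Nat.sqrt_le' t)
  have hsq : Real.sqrt t ^ 2 = (t:ℝ) := Real.sq_sqrt (by positivity)
  -- set up
  set y : ℝ := Real.exp (lam / s) - 1 with hy
  have h1y : 1 + y = Real.exp (lam / s) := by rw [hy]; ring
  have hy0 : 0 ≤ y := by
    rw [hy]
    have : (1:ℝ) ≤ Real.exp (lam / s) := Real.one_le_exp (by positivity)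
    linarith
  set N : ℝ := (t.choose s : ℝ) with hN
  have hNpos : (0:ℝ) < N := by rw [hN]; exact_mod_cast Nat.choose_pos hst
  have hNcard : ((F.powersetCard s).card : ℝ) = N := by
    rw [Finset.card_powersetCard, hF]
  set a : ℝ := 1 + (s:ℝ) * y / t with ha
  have hx0 : (0:ℝ) ≤ (s:ℝ) * y / t := by positivity
  -- per-pair bound
  have pair : ∀ S ∈ F.powersetCard s, ∀ S' ∈ F.powersetCard s,
      Real.exp ((inner ℝ (Δ S) (Δ S') : ℝ) / σ ^ 2) ≤ (1 + y) ^ (S ∩ S').card := by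
    intro S hS S' hS'
    have h := hinner S hS S' hS'
    have hσ2 : (0:ℝ) < σ ^ 2 := by positivity
    have hdiv : (inner ℝ (Δ S) (Δ S') : ℝ) / σ ^ 2 ≤ lam / s * ((S ∩ S').card : ℝ) := by
      rw [div_le_iff₀ hσ2]; nlinarith [h]
    calc Real.exp ((inner ℝ (Δ S) (Δ S') : ℝ) / σ ^ 2)
        ≤ Real.exp (lam / s * ((S ∩ S').card : ℝ)) := Real.exp_le_exp.mpr hdiv
      _ = Real.exp (lam / s) ^ (S ∩ S').card := by
          rw [← Real.exp_nat_mul, mul_comm]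
      _ = (1 + y) ^ (S ∩ S').card := by rw [h1y]
  -- total bound
  have total : ∑ S ∈ F.powersetCard s, ∑ S' ∈ F.powersetCard s,
      Real.exp ((inner ℝ (Δ S) (Δ S') : ℝ) / σ ^ 2) ≤ N * (N * a ^ s) := by
    rw [show N * (N * a ^ s) = ∑ _S ∈ F.powersetCard s, N * a^s by
      rw [Finset.sum_const, nsmul_eq_mul, hNcard]]
    refine Finset.sum_le_sum fun S hS => ?_
    calc ∑ S' ∈ F.powersetCard s, Real.exp ((inner ℝ (Δ S) (Δ S') : ℝ) / σ ^ 2)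
        ≤ ∑ S' ∈ F.powersetCard s, (1 + y) ^ (S ∩ S').card :=
          Finset.sum_le_sum fun S' hS' => pair S hS S' hS'
      _ ≤ N * a ^ s := key_sum_bound F t s hF hst htpos S hS y hy0
  -- reduce to a^s
  have lhs_le : ((F.powersetCard s).card : ℝ)⁻¹ ^ 2 *
      ∑ S ∈ F.powersetCard s, ∑ S' ∈ F.powersetCard s,
        Real.exp ((inner ℝ (Δ S) (Δ S') : ℝ) / σ ^ 2) ≤ a ^ s := by
    rw [hNcard]
    calc (N⁻¹) ^ 2 * ∑ S ∈ F.powersetCard s, ∑ S' ∈ F.powersetCard s,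
          Real.exp ((inner ℝ (Δ S) (Δ S') : ℝ) / σ ^ 2)
        ≤ (N⁻¹) ^ 2 * (N * (N * a ^ s)) := by
          apply mul_le_mul_of_nonneg_left total (by positivity)
      _ = a ^ s := by field_simp
  -- a^s ≤ exp(s^2/t * y)
  have hexp1 : a ^ s ≤ Real.exp ((s:ℝ) * ((s:ℝ) * y / t)) := by
    calc a ^ s ≤ Real.exp ((s:ℝ) * y / t) ^ s := by
          apply pow_le_pow_left₀ (by positivity)
          rw [ha]; linarith [Real.add_one_le_exp ((s:ℝ) * y / t)]
      _ = Real.exp ((s:ℝ) * ((s:ℝ) * y / t)) := (Real.exp_nat_mul _ s).symm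
  -- final exponent comparison
  have hexp2 : (s:ℝ) * ((s:ℝ) * y / t) ≤ -(1 - 1 / Real.sqrt t) ^ 2
      + Real.exp ((2 + lam) / (Real.sqrt t - 1)) := by
    have hr : (s:ℝ) * ((s:ℝ) * y / t) = (s:ℝ)^2 / t * Real.exp (lam / s) - (s:ℝ)^2 / t := by
      rw [hy]; field_simp
    have hr1 : (s:ℝ)^2 / t ≤ 1 := by rw [div_le_one htR]; exact hs2t
    have hrB : (1 - 1 / Real.sqrt t) ^ 2 ≤ (s:ℝ)^2 / t := by
      have h1 : (1 - 1 / Real.sqrt t) = (Real.sqrt t - 1) / Real.sqrt t := by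
        field_simp
      rw [h1, div_pow, hsq]
      gcongr
    have hEA : Real.exp (lam / s) ≤ Real.exp ((2 + lam) / (Real.sqrt t - 1)) := by
      apply Real.exp_le_exp.mpr
      calc lam / s ≤ lam / (Real.sqrt t - 1) := by
            apply div_le_div_of_nonneg_left hlam hsqrtpos hsub1
        _ ≤ (2 + lam) / (Real.sqrt t - 1) := by
            gcongr <;> linarith
    have hEpos : 0 ≤ Real.exp (lam / s) := (Real.exp_pos _).le
    nlinarith [mul_le_mul_of_nonneg_right hr1 hEpos]
  calc ((F.powersetCard s).card : ℝ)⁻¹ ^ 2 *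
      ∑ S ∈ F.powersetCard s, ∑ S' ∈ F.powersetCard s,
        Real.exp ((inner ℝ (Δ S) (Δ S') : ℝ) / σ ^ 2)
      ≤ a ^ s := lhs_le
    _ ≤ Real.exp ((s:ℝ) * ((s:ℝ) * y / t)) := hexp1
    _ ≤ Real.exp (-(1 - 1 / Real.sqrt t) ^ 2
          + Real.exp ((2 + lam) / (Real.sqrt t - 1))) := Real.exp_le_exp.mpr hexp2
end
end

section
/- Let μ_s > μ' > 0 and δ > 0 satisfy (μ')² ≤ δ²μ_s/64, set t := μ'/μ_s ∈ (0,1), and let θ*_s ∈ [√μ_s − δ, √μ_s]. Assume (δ² − μ')(1−t) + t(θ*_s)² ≥ 0, and define Δ := √( (δ² − μ')/(1−t) + t(θ*_s)²/(1−t)² ) − tθ*_s/(1−t). Then δ² − Δ² ≤ δ²/2. -/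
set_option maxHeartbeats 2000000 in
/-- Lemma 8 (key computation for Corollary 2): with t = μ'/μ_s and
Δ = √((δ²−μ')/(1−t) + t θ*_s²/(1−t)²) − tθ*_s/(1−t), one has δ² − Δ² ≤ δ²/2. -/
theorem stmt11 (μs μ' δ θs t Δ : ℝ)
    (hμ' : 0 < μ') (hμs : μ' < μs) (hδ : 0 < δ)
    (hsmall : μ' ^ 2 ≤ δ ^ 2 * μs / 64)
    (ht : t = μ' / μs)
    (hθs : Real.sqrt μs - δ ≤ θs) (hθs' : θs ≤ Real.sqrt μs)
    (hnn : 0 ≤ (δ ^ 2 - μ') * (1 - t) + t * θs ^ 2)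
    (hΔ : Δ = Real.sqrt ((δ ^ 2 - μ') / (1 - t) + t * θs ^ 2 / (1 - t) ^ 2)
      - t * θs / (1 - t)) :
    δ ^ 2 - Δ ^ 2 ≤ δ ^ 2 / 2 := by
  have hμs0 : 0 < μs := hμ'.trans hμs
  have ht0 : 0 < t := by rw [ht]; positivity
  have ht1 : t < 1 := by rw [ht]; exact (div_lt_one hμs0).mpr hμs
  have h1t : 0 < 1 - t := by linarith
  set s := Real.sqrt μs with hs
  have hs2 : s ^ 2 = μs := Real.sq_sqrt hμs0.le
  have hs0 : 0 < s := Real.sqrt_pos.mpr hμs0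
  have hμ's : μ' ≤ δ * s / 8 := by nlinarith [hsmall, hs2, mul_pos hδ hs0]
  have htv : t * μs = μ' := by rw [ht]; field_simp
  have hts : t * s ≤ δ / 8 := by
    have h1 : t * s * s = μ' := by nlinarith [htv, hs2]
    nlinarith [hμ's, hs0]
  have htθs : t * θs ≤ δ / 8 := by
    have : t * θs ≤ t * s := by nlinarith [hθs', ht0]
    linarith
  -- lower bound on N := δ² - μ' + t θs²
  have hN : 3 * δ ^ 2 / 4 ≤ δ ^ 2 - μ' + t * θs ^ 2 := by
    rcases le_or_gt δ s with h | h
    · have hθ0 : 0 ≤ s - δ := by linarith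
      have h1 : (s - δ) ^ 2 ≤ θs ^ 2 := by nlinarith
      have h2 : t * (s - δ) ^ 2 ≤ t * θs ^ 2 :=
        mul_le_mul_of_nonneg_left h1 ht0.le
      have h3 : t * s ^ 2 = μ' := by rw [hs2]; exact htv
      have h5 : 2 * δ * (t * s) ≤ 2 * δ * (δ / 8) :=
        mul_le_mul_of_nonneg_left hts (by linarith)
      have h4 : μ' - δ ^ 2 / 4 ≤ t * (s - δ) ^ 2 := by
        nlinarith [h3, h5, mul_nonneg ht0.le (sq_nonneg δ)]
      linarith
    · have h1 : μ' ≤ δ ^ 2 / 8 := by nlinarith [hμ's]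
      have h2 : 0 ≤ t * θs ^ 2 := by positivity
      linarith
  set A := (δ ^ 2 - μ') / (1 - t) + t * θs ^ 2 / (1 - t) ^ 2 with hA
  have hAe : A * (1 - t) ^ 2 = (δ ^ 2 - μ') * (1 - t) + t * θs ^ 2 := by
    rw [hA]; field_simp
  have hAnn : 0 ≤ A := by
    have h1 : 0 ≤ A * (1 - t) ^ 2 := by rw [hAe]; exact hnn
    nlinarith [h1, mul_pos h1t h1t]
  have hsq : Real.sqrt A ^ 2 = A := Real.sq_sqrt hAnn
  have hΔ0 : 0 ≤ Δ := by
    rcases le_or_gt (t * θs) 0 with h | h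
    · have : t * θs / (1 - t) ≤ 0 := div_nonpos_of_nonpos_of_nonneg h h1t.le
      have := Real.sqrt_nonneg A
      rw [hΔ]; linarith
    · have hb : t * θs / (1 - t) ≤ Real.sqrt A := by
        rw [show t * θs / (1 - t) = Real.sqrt ((t * θs / (1 - t)) ^ 2) by
          rw [Real.sqrt_sq (by positivity)]]
        apply Real.sqrt_le_sqrt
        rw [div_pow, div_le_iff₀ (by positivity : (0:ℝ) < (1 - t) ^ 2)]
        rw [hAe]
        nlinarith [hN, h1t, mul_pos h1t (by nlinarith [hN, hδ] : (0:ℝ) < δ ^ 2 - μ' + t * θs ^ 2)]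
      rw [hΔ]; linarith
  have h5 : Δ * (1 - t) + t * θs = Real.sqrt A * (1 - t) := by
    rw [hΔ]; field_simp; ring
  have h6 : (Δ * (1 - t) + t * θs) ^ 2 = A * (1 - t) ^ 2 := by
    rw [h5, mul_pow, hsq]
  have h68 : (Δ * (1 - t) + t * θs) ^ 2 = (δ ^ 2 - μ') * (1 - t) + t * θs ^ 2 := by
    rw [h6, hAe]
  have h9 : (1 - t) * ((1 - t) * Δ ^ 2 + 2 * (t * θs) * Δ) =
      (1 - t) * (δ ^ 2 - μ' + t * θs ^ 2) := by linear_combination h68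
  have hID : (1 - t) * Δ ^ 2 + 2 * (t * θs) * Δ = δ ^ 2 - μ' + t * θs ^ 2 :=
    mul_left_cancel₀ h1t.ne' h9
  -- from the identity: Δ² + (δ/4)Δ ≥ 3δ²/4, hence Δ ≥ 3δ/4
  have hkey : 3 * δ ^ 2 / 4 ≤ Δ ^ 2 + (δ / 4) * Δ := by
    nlinarith [hID, hN, htθs, hΔ0, ht0, sq_nonneg Δ]
  have hΔge : 3 * δ / 4 ≤ Δ := by nlinarith [hkey, hΔ0, hδ]
  nlinarith [hΔge, hδ]
end

section
/- Let H ∈ ℝ^{m×m} with singular values ν_1(H) ≥ ⋯ ≥ ν_m(H) ≥ 0. (i) If every column of H has squared Euclidean norm at most B, then for every s ∈ {1,…,m} one has ν_s(H)² ≤ mB/s. (ii) If H is upper triangular with all diagonal entries equal to 1 and every column's off-diagonal part has Euclidean norm at most ρ ≥ 0, then for every t ∈ {1,…,m−1} one has ν_{t+1}(H) ≥ 1 − t/m − ρ. -/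
open Matrix Finset in
lemma aux_frob (m : ℕ) (H : Matrix (Fin m) (Fin m) ℝ)
    (ν : Fin m → ℝ) (Q V : Matrix (Fin m) (Fin m) ℝ)
    (hQt : Qᵀ * Q = 1) (hVt : Vᵀ * V = 1)
    (hSVD : H = Q * Matrix.diagonal ν * Vᵀ) :
    ∑ j : Fin m, ∑ i : Fin m, H i j ^ 2 = ∑ i : Fin m, ν i ^ 2 := by
  have h1 : ∑ j : Fin m, ∑ i : Fin m, H i j ^ 2 = (Hᵀ * H).trace := by
    simp [Matrix.trace, Matrix.diag, Matrix.mul_apply, sq]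
  have h2 : Hᵀ * H = V * (Matrix.diagonal ν * Matrix.diagonal ν) * Vᵀ := by
    rw [hSVD]
    have e1 : (Q * Matrix.diagonal ν * Vᵀ)ᵀ * (Q * Matrix.diagonal ν * Vᵀ)
        = V * (Matrix.diagonal ν)ᵀ * (Qᵀ * Q) * (Matrix.diagonal ν) * Vᵀ := by
      simp only [Matrix.transpose_mul, Matrix.transpose_transpose]
      noncomm_ring
    rw [e1, hQt, Matrix.mul_one, Matrix.diagonal_transpose, Matrix.mul_assoc V,
      ← Matrix.mul_assoc V]
  rw [h1, h2, Matrix.trace_mul_comm (V * (Matrix.diagonal ν * Matrix.diagonal ν)) Vᵀ,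
    ← Matrix.mul_assoc, hVt, Matrix.one_mul, Matrix.diagonal_mul_diagonal,
    Matrix.trace_diagonal]
  exact Finset.sum_congr rfl fun i _ => (sq (ν i)).symm

open Matrix Finset in
lemma aux_nuclear (m : ℕ) (H : Matrix (Fin m) (Fin m) ℝ)
    (ν : Fin m → ℝ) (Q V : Matrix (Fin m) (Fin m) ℝ)
    (hQ : Q * Qᵀ = 1) (hVt : Vᵀ * V = 1)
    (hSVD : H = Q * Matrix.diagonal ν * Vᵀ) (hnn : ∀ i, 0 ≤ ν i) :
    H.trace ≤ ∑ i : Fin m, ν i := by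
  set W : Matrix (Fin m) (Fin m) ℝ := Vᵀ * Q with hWdef
  have hW : W * Wᵀ = 1 := by
    rw [hWdef, Matrix.transpose_mul, Matrix.transpose_transpose,
      Matrix.mul_assoc, ← Matrix.mul_assoc Q, hQ, Matrix.one_mul, hVt]
  have hWii : ∀ i, W i i ≤ 1 := by
    intro i
    have h1 : (W * Wᵀ) i i = 1 := by rw [hW]; simp
    have h2 : ∑ j, W i j * W i j = 1 := by
      simpa [Matrix.mul_apply] using h1
    nlinarith [Finset.single_le_sum (f := fun j => W i j * W i j)
      (fun j _ => mul_self_nonneg (W i j)) (Finset.mem_univ i)]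
  have htr : H.trace = ∑ i, W i i * ν i := by
    rw [hSVD, Matrix.mul_assoc, Matrix.trace_mul_comm Q (Matrix.diagonal ν * Vᵀ),
      Matrix.mul_assoc, ← Matrix.mul_assoc (Matrix.diagonal ν)]
    rw [Matrix.mul_assoc (Matrix.diagonal ν), Matrix.trace_mul_comm (Matrix.diagonal ν) (Vᵀ * Q)]
    rw [← hWdef]
    simp [Matrix.trace, Matrix.diag, Matrix.mul_diagonal]
  rw [htr]
  exact Finset.sum_le_sum fun i _ => by
    nlinarith [hnn i, hWii i]

open Finset in
lemma aux_card_lt (m t : ℕ) (h : t ≤ m) :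
    (Finset.univ.filter (fun i : Fin m => (i : ℕ) < t)).card = t := by
  rw [Finset.card_filter]
  rw [Fin.sum_univ_eq_sum_range (fun i => if i < t then 1 else 0)]
  rw [← Finset.card_filter]
  rw [show Finset.filter (fun i => i < t) (Finset.range m) = Finset.range t by
    ext x; simp; omega]
  exact Finset.card_range t
set_option maxHeartbeats 1000000 in

lemma aux_scalar (T M a ρ Sh St SA SB : ℝ)
    (hT : 1 ≤ T) (hM : T + 1 ≤ M) (ha : 0 ≤ a) (hρ : 0 ≤ ρ)
    (h1 : M ≤ Sh + St) (h2 : St ≤ (M - T) * a) (h3 : 0 ≤ Sh)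
    (h5 : Sh ^ 2 ≤ T * SA) (h6 : 2 * a * St - (M - T) * a ^ 2 ≤ SB)
    (h7 : SA + SB ≤ M * (1 + ρ ^ 2)) :
    1 - T / M - ρ ≤ a := by
  by_contra hcon
  push_neg at hcon
  have hM0 : (0 : ℝ) < M := by linarith
  have hcon' : a * M < M - T - ρ * M := by
    have h := (mul_lt_mul_iff_left₀ hM0).mpr hcon
    rw [sub_mul, sub_mul, div_mul_cancel₀, one_mul] at h
    · linarith
    · exact ne_of_gt hM0
  have ha1 : a < 1 := by nlinarith
  have hP : 0 < M - T - ρ * M - a * M := by linarith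
  have hStM : St ≤ M - T := by nlinarith
  have hkey : (M - St) ^ 2 ≤ Sh ^ 2 := by nlinarith
  have hT0 : (0 : ℝ) < T := by linarith
  have hT6 : T * (2 * a * St - (M - T) * a ^ 2) ≤ T * SB :=
    mul_le_mul_of_nonneg_left h6 hT0.le
  have hT7 : T * (SA + SB) ≤ T * (M * (1 + ρ ^ 2)) :=
    mul_le_mul_of_nonneg_left h7 hT0.le
  have hq : (M - (M - T) * a) ^ 2 + 2 * T * (M - T) * a ^ 2
      ≤ (M - St) ^ 2 + 2 * T * a * St := by
    nlinarith [mul_nonneg (sub_nonneg.2 h2)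
      (show (0 : ℝ) ≤ 2 * M - (M - T) * a - St - 2 * T * a by nlinarith)]
  have h9 : (M - (M - T) * a) ^ 2 + T * (M - T) * a ^ 2 ≤ T * (M * (1 + ρ ^ 2)) := by
    nlinarith
  have h10 : M * ((M - T) * (1 - a) ^ 2) ≤ T * M * ρ ^ 2 := by nlinarith
  set u : ℝ := M * (1 - a) with hu
  set r : ℝ := ρ * M with hr
  have hr0 : 0 ≤ r := mul_nonneg hρ hM0.le
  have hPu : T + r < u := by rw [hu, hr]; nlinarith
  have hu0 : 0 < u := by nlinarith
  have h11 : (M - T) * u ^ 2 ≤ T * r ^ 2 := by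
    have := mul_le_mul_of_nonneg_left h10 hM0.le
    rw [hu, hr]; nlinarith
  have h12 : (T + r) ^ 2 < u ^ 2 := by nlinarith
  have h14 : (M - T) * (T + r) ^ 2 < (M - T) * u ^ 2 :=
    mul_lt_mul_of_pos_left h12 (by linarith)
  have hrM : r ≤ M - T := by nlinarith [mul_nonneg ha hM0.le]
  have h13 : T * r * r ≤ T * r * (M - T) :=
    mul_le_mul_of_nonneg_left hrM (mul_nonneg hT0.le hr0)
  nlinarith [h14, h11, h13, mul_nonneg (mul_nonneg hT0.le hr0) (show (0:ℝ) ≤ M - T by linarith),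
    mul_pos (mul_pos hT0 hT0) (show (0:ℝ) < M - T by linarith)]



open Matrix in
/-- Singular value bounds: let H be an m×m real matrix with singular value decomposition
H = Q·diag(ν)·Vᵀ, ν non-increasing and nonnegative. (i) If every column of H has squared
Euclidean norm at most B then ν_s² ≤ mB/s for every s ∈ {1,…,m}. (ii) If H is upper
triangular with unit diagonal and each column's off-diagonal part has norm at most ρ, then
ν_{t+1} ≥ 1 − t/m − ρ for every t ∈ {1,…,m−1}. -/
theorem stmt14 (m : ℕ) (hm : 1 ≤ m) (H : Matrix (Fin m) (Fin m) ℝ)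
    (ν : Fin m → ℝ) (Q V : Matrix (Fin m) (Fin m) ℝ)
    (hQ : Q * Qᵀ = 1) (hV : V * Vᵀ = 1)
    (hSVD : H = Q * Matrix.diagonal ν * Vᵀ)
    (hanti : Antitone ν) (hnn : ∀ i, 0 ≤ ν i) :
    (∀ B : ℝ, (∀ j : Fin m, ∑ i : Fin m, H i j ^ 2 ≤ B) →
      ∀ s : ℕ, ∀ hs1 : 1 ≤ s, ∀ hs2 : s ≤ m,
        ν ⟨s - 1, by omega⟩ ^ 2 ≤ (m : ℝ) * B / s) ∧
    ((∀ i j : Fin m, j < i → H i j = 0) → (∀ i : Fin m, H i i = 1) →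
      ∀ ρ : ℝ, 0 ≤ ρ →
      (∀ j : Fin m, Real.sqrt (∑ i ∈ Finset.univ.filter (· ≠ j), H i j ^ 2) ≤ ρ) →
      ∀ t : ℕ, ∀ ht1 : 1 ≤ t, ∀ ht2 : t ≤ m - 1,
        1 - (t : ℝ) / m - ρ ≤ ν ⟨t, by omega⟩) := by
  have hQt : Qᵀ * Q = 1 := mul_eq_one_comm.mp hQ
  have hVt : Vᵀ * V = 1 := mul_eq_one_comm.mp hV
  have hfrob := aux_frob m H ν Q V hQt hVt hSVD
  constructor
  · -- part (i)
    intro B hB s hs1 hs2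
    set i₀ : Fin m := ⟨s - 1, by omega⟩ with hi₀
    have hs0 : (0 : ℝ) < (s : ℝ) := by exact_mod_cast hs1
    have hsum_le : ∑ i : Fin m, ν i ^ 2 ≤ (m : ℝ) * B := by
      rw [← hfrob]
      calc ∑ j : Fin m, ∑ i : Fin m, H i j ^ 2 ≤ ∑ _j : Fin m, B :=
            Finset.sum_le_sum fun j _ => hB j
        _ = (m : ℝ) * B := by
            simp [Finset.sum_const, Finset.card_univ, nsmul_eq_mul]
    have hlow : (s : ℝ) * ν i₀ ^ 2 ≤ ∑ i : Fin m, ν i ^ 2 := by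
      have hcard := aux_card_lt m s hs2
      calc (s : ℝ) * ν i₀ ^ 2
          = ∑ _i ∈ Finset.univ.filter (fun i : Fin m => (i : ℕ) < s), ν i₀ ^ 2 := by
            rw [Finset.sum_const, hcard, nsmul_eq_mul]
        _ ≤ ∑ i ∈ Finset.univ.filter (fun i : Fin m => (i : ℕ) < s), ν i ^ 2 := by
            refine Finset.sum_le_sum fun i hi => ?_
            have hi' : (i : ℕ) < s := (Finset.mem_filter.mp hi).2
            have hle : i ≤ i₀ := Fin.le_def.mpr (show (i : ℕ) ≤ s - 1 by omega)
            exact pow_le_pow_left₀ (hnn i₀) (hanti hle) 2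
        _ ≤ ∑ i : Fin m, ν i ^ 2 :=
            Finset.sum_le_sum_of_subset_of_nonneg (Finset.filter_subset _ _)
              (fun i _ _ => sq_nonneg _)
    rw [le_div_iff₀ hs0]
    nlinarith
  · -- part (ii)
    intro htri hdiag ρ hρ hcol t ht1 ht2
    have htm : t + 1 ≤ m := by omega
    have htrH : H.trace = (m : ℝ) := by
      simp [Matrix.trace, Matrix.diag, hdiag]
    have hnuc : (m : ℝ) ≤ ∑ i : Fin m, ν i := by
      rw [← htrH]; exact aux_nuclear m H ν Q V hQ hVt hSVD hnn
    have hcolsq : ∀ j : Fin m, ∑ i : Fin m, H i j ^ 2 ≤ 1 + ρ ^ 2 := by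
      intro j
      have hsplit : ∑ i : Fin m, H i j ^ 2
          = H j j ^ 2 + ∑ i ∈ Finset.univ.erase j, H i j ^ 2 :=
        (Finset.add_sum_erase _ _ (Finset.mem_univ j)).symm
      have hfe : Finset.univ.filter (· ≠ j) = (Finset.univ : Finset (Fin m)).erase j :=
        Finset.filter_ne' _ _
      have h0 : 0 ≤ ∑ i ∈ Finset.univ.erase j, H i j ^ 2 :=
        Finset.sum_nonneg fun i _ => sq_nonneg _
      have hle : ∑ i ∈ Finset.univ.erase j, H i j ^ 2 ≤ ρ ^ 2 := by
        have hc := hcol j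
        rw [hfe] at hc
        nlinarith [Real.sq_sqrt h0, Real.sqrt_nonneg (∑ i ∈ Finset.univ.erase j, H i j ^ 2)]
      rw [hsplit, hdiag j]
      norm_num
      linarith
    have hsq : ∑ i : Fin m, ν i ^ 2 ≤ (m : ℝ) * (1 + ρ ^ 2) := by
      rw [← hfrob]
      calc ∑ j : Fin m, ∑ i : Fin m, H i j ^ 2 ≤ ∑ _j : Fin m, (1 + ρ ^ 2) :=
            Finset.sum_le_sum fun j _ => hcolsq j
        _ = (m : ℝ) * (1 + ρ ^ 2) := by
            simp [Finset.sum_const, Finset.card_univ, nsmul_eq_mul]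
            ring
    set it : Fin m := ⟨t, by omega⟩ with hit
    set a : ℝ := ν it with hadef
    set A : Finset (Fin m) := Finset.univ.filter (fun i : Fin m => (i : ℕ) < t) with hA
    set Bs : Finset (Fin m) := Finset.univ.filter (fun i : Fin m => ¬ (i : ℕ) < t) with hBs
    have hcardA : A.card = t := aux_card_lt m t (by omega)
    have hcardB : Bs.card = m - t := by
      have := Finset.card_filter_add_card_filter_not
        (s := (Finset.univ : Finset (Fin m))) (p := fun i : Fin m => (i : ℕ) < t)
      rw [← hA, ← hBs] at this
      simp [Finset.card_univ] at this
      omega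
    have hmt : ((m - t : ℕ) : ℝ) = (m : ℝ) - t := by
      rw [Nat.cast_sub (by omega)]
    have h1 : (m : ℝ) ≤ (∑ i ∈ A, ν i) + ∑ i ∈ Bs, ν i := by
      rw [hA, hBs, Finset.sum_filter_add_sum_filter_not]
      exact hnuc
    have h2 : ∑ i ∈ Bs, ν i ≤ ((m : ℝ) - t) * a := by
      calc ∑ i ∈ Bs, ν i ≤ ∑ _i ∈ Bs, a := by
            refine Finset.sum_le_sum fun i hi => ?_
            have hi' : ¬ (i : ℕ) < t := by
              rw [hBs] at hi; exact (Finset.mem_filter.mp hi).2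
            exact hanti (Fin.le_def.mpr (show t ≤ (i : ℕ) by omega))
        _ = ((m : ℝ) - t) * a := by
            rw [Finset.sum_const, hcardB, nsmul_eq_mul, hmt]
    have h3 : 0 ≤ ∑ i ∈ A, ν i := Finset.sum_nonneg fun i _ => hnn i
    have h5 : (∑ i ∈ A, ν i) ^ 2 ≤ (t : ℝ) * ∑ i ∈ A, ν i ^ 2 := by
      have := Finset.sum_mul_sq_le_sq_mul_sq A ν (fun _ => 1)
      simp only [mul_one, one_pow, Finset.sum_const, hcardA, nsmul_eq_mul] at this
      linarith
    have h6 : 2 * a * (∑ i ∈ Bs, ν i) - ((m : ℝ) - t) * a ^ 2 ≤ ∑ i ∈ Bs, ν i ^ 2 := by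
      have hexp : ∑ i ∈ Bs, (ν i - a) ^ 2
          = (∑ i ∈ Bs, ν i ^ 2) - 2 * a * (∑ i ∈ Bs, ν i) + ((m : ℝ) - t) * a ^ 2 := by
        have : ∀ i ∈ Bs, (ν i - a) ^ 2 = ν i ^ 2 - 2 * a * ν i + a ^ 2 :=
          fun i _ => by ring
        rw [Finset.sum_congr rfl this, Finset.sum_add_distrib, Finset.sum_sub_distrib,
          ← Finset.mul_sum, Finset.sum_const, hcardB, nsmul_eq_mul, hmt]
      have hpos : 0 ≤ ∑ i ∈ Bs, (ν i - a) ^ 2 :=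
        Finset.sum_nonneg fun i _ => sq_nonneg _
      linarith
    have h7 : (∑ i ∈ A, ν i ^ 2) + ∑ i ∈ Bs, ν i ^ 2 ≤ (m : ℝ) * (1 + ρ ^ 2) := by
      rw [hA, hBs, Finset.sum_filter_add_sum_filter_not]
      exact hsq
    exact aux_scalar (t : ℝ) (m : ℝ) a ρ (∑ i ∈ A, ν i) (∑ i ∈ Bs, ν i)
      (∑ i ∈ A, ν i ^ 2) (∑ i ∈ Bs, ν i ^ 2)
      (by exact_mod_cast ht1) (by exact_mod_cast htm) (hnn it) hρ
      h1 h2 h3 h5 h6 h7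
end

section
/- Let t ≥ 4 be an integer, set s := ⌊√t⌋, and for i ∈ {0,1,…,s} define G_i := (s!·(t−s)!)² / ( ((s−i)!)² · t! · (t−2s+i)! ). Then: (a) G_0 ≤ exp(−(1 − 1/√t)²); (b) for each i ∈ {1,…,s}, G_i/G_{i−1} = (s−i+1)²/(t−2s+i) ≤ exp(2/(√t − 1)); and consequently (c) G_i ≤ exp(−(1 − 1/√t)² + 2i/(√t − 1)) for all i ∈ {0,1,…,s}. -/
private lemma aux_div1 (a b c : ℝ) (ha : a ≠ 0) (hb : b ≠ 0) (hc : c ≠ 0) :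
    (a * b) ^ 2 / (a * b * c * a) = b / c := by
  field_simp

private lemma aux_div2 (A T a b c d : ℝ) (hA : A ≠ 0) (hT : T ≠ 0) (ha : a ≠ 0)
    (hc : c ≠ 0) (hb : b + 1 ≠ 0) (hd : d + 1 ≠ 0) :
    A ^ 2 / (a ^ 2 * T * ((d + 1) * c)) / (A ^ 2 / (((b + 1) * a) ^ 2 * T * c))
      = (b + 1) ^ 2 / (d + 1) := by
  field_simp

/-- Combinatorial factorial bounds: for t ≥ 4 and s = ⌊√t⌋, with
G_i = (s!(t−s)!)²/(((s−i)!)²·t!·(t−2s+i)!), one has (a) G_0 ≤ exp(−(1−1/√t)²),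
(b) G_i/G_{i−1} = (s−i+1)²/(t−2s+i) ≤ exp(2/(√t−1)), and
(c) G_i ≤ exp(−(1−1/√t)² + 2i/(√t−1)). -/
theorem stmt17 (t : ℕ) (ht : 4 ≤ t) (s : ℕ) (hs : s = Nat.sqrt t)
    (G : ℕ → ℝ)
    (hG : ∀ i, G i = ((s.factorial : ℝ) * ((t - s).factorial : ℝ)) ^ 2 /
      (((s - i).factorial : ℝ) ^ 2 * (t.factorial : ℝ) * ((t - 2 * s + i).factorial : ℝ))) :
    G 0 ≤ Real.exp (-(1 - 1 / Real.sqrt t) ^ 2) ∧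
      (∀ i : ℕ, 1 ≤ i → i ≤ s →
        G i / G (i - 1) = ((s - i + 1 : ℕ) : ℝ) ^ 2 / ((t - 2 * s + i : ℕ) : ℝ) ∧
        G i / G (i - 1) ≤ Real.exp (2 / (Real.sqrt t - 1))) ∧
      (∀ i : ℕ, i ≤ s →
        G i ≤ Real.exp (-(1 - 1 / Real.sqrt t) ^ 2 + 2 * i / (Real.sqrt t - 1))) := by
  set R := Real.sqrt t with hR
  -- basic numeric facts
  have h2s : 2 ≤ s := by
    rw [hs]
    calc 2 = Nat.sqrt 4 := by norm_num
    _ ≤ Nat.sqrt t := Nat.sqrt_le_sqrt ht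
  have hss : s * s ≤ t := by
    rw [hs]; simpa [pow_two] using Nat.sqrt_le' t
  have h2st : 2 * s ≤ t := le_trans (by nlinarith) hss
  have hRt : R ^ 2 = (t : ℝ) := Real.sq_sqrt (by positivity)
  have h2R : (2 : ℝ) ≤ R := by
    rw [hR, show (2:ℝ) = Real.sqrt 4 by
      rw [show (4:ℝ) = 2^2 by norm_num, Real.sqrt_sq (by norm_num)]]
    exact Real.sqrt_le_sqrt (by exact_mod_cast ht)
  have hsq2 : ((s:ℝ))^2 ≤ (t:ℝ) := by
    have : s^2 ≤ t := by nlinarith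
    exact_mod_cast this
  have hsR : (s : ℝ) ≤ R := by
    rw [hR, show ((s:ℝ)) = Real.sqrt ((s:ℝ)^2) from (Real.sqrt_sq (by positivity)).symm]
    exact Real.sqrt_le_sqrt hsq2
  have hRs : R ≤ (s : ℝ) + 1 := by
    have h0 : t < (s + 1)^2 := by
      have := Nat.lt_succ_sqrt' t
      rw [← hs] at this
      nlinarith [this]
    have h1 : (t : ℝ) ≤ ((s:ℝ) + 1)^2 := by
      have : (t:ℝ) < ((s:ℝ)+1)^2 := by exact_mod_cast h0
      linarith
    calc R = Real.sqrt t := hR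
    _ ≤ Real.sqrt (((s:ℝ)+1)^2) := Real.sqrt_le_sqrt h1
    _ = (s:ℝ) + 1 := Real.sqrt_sq (by positivity)
  have hR1 : (0:ℝ) < R - 1 := by linarith
  have htpos : (0:ℝ) < t := by positivity
  -- positivity of G
  have hGpos : ∀ i, 0 < G i := by
    intro i
    rw [hG]
    positivity
  -- Part (a)
  have ha : G 0 ≤ Real.exp (-(1 - 1 / R) ^ 2) := by
    have hG0 : G 0 = (((t - s).factorial : ℝ)) ^ 2 /
        ((t.factorial : ℝ) * ((t - 2 * s).factorial : ℝ)) := by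
      rw [hG]
      simp only [Nat.sub_zero, Nat.add_zero]
      have h1 : ((s.factorial : ℝ)) ≠ 0 := by positivity
      have h2 : ((t.factorial : ℝ)) ≠ 0 := by positivity
      have h3 : (((t - 2*s).factorial : ℝ)) ≠ 0 := by positivity
      field_simp
    have hd1 : (t - s - s).factorial * (t - s).descFactorial s = (t - s).factorial :=
      Nat.factorial_mul_descFactorial (by omega)
    have hd2 : (t - s).factorial * t.descFactorial s = t.factorial :=
      Nat.factorial_mul_descFactorial (by omega)
    have hts : t - s - s = t - 2 * s := by omega
    rw [hts] at hd1
    have hprod : G 0 = ∏ j ∈ Finset.range s, (((t - s - j : ℕ) : ℝ) / ((t - j : ℕ) : ℝ)) := by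
      rw [hG0]
      rw [Nat.descFactorial_eq_prod_range] at hd1 hd2
      rw [Finset.prod_div_distrib]
      rw [← Nat.cast_prod, ← Nat.cast_prod]
      have hfac1 : ((t - s).factorial : ℝ) =
          ((t - 2*s).factorial : ℝ) * ((∏ j ∈ Finset.range s, (t - s - j) : ℕ) : ℝ) := by
        exact_mod_cast congrArg (Nat.cast (R := ℝ)) hd1.symm
      have hfac2 : ((t).factorial : ℝ) =
          ((t - s).factorial : ℝ) * ((∏ j ∈ Finset.range s, (t - j) : ℕ) : ℝ) := by
        exact_mod_cast congrArg (Nat.cast (R := ℝ)) hd2.symm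
      have hne1 : (((t - 2*s).factorial : ℝ)) ≠ 0 := by positivity
      have hne1' : (((t - s).factorial : ℝ)) ≠ 0 := by positivity
      have hne3 : ((∏ j ∈ Finset.range s, (t - j) : ℕ) : ℝ) ≠ 0 := by
        have h0 : ((t).factorial : ℝ) ≠ 0 := by positivity
        intro hz
        rw [hfac2, hz, mul_zero] at h0
        exact h0 rfl
      have hne2 : ((∏ j ∈ Finset.range s, (t - s - j) : ℕ) : ℝ) ≠ 0 := by
        intro hz
        rw [hfac1, hz, mul_zero] at hne1'
        exact hne1' rfl
      rw [hfac2, hfac1]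
      exact aux_div1 _ _ _ hne1 hne2 hne3
    have hfactor : ∀ j ∈ Finset.range s,
        (((t - s - j : ℕ) : ℝ) / ((t - j : ℕ) : ℝ)) ≤ Real.exp (-((s:ℝ)/t)) := by
      intro j hj
      rw [Finset.mem_range] at hj
      have hjt : j < t := by omega
      have hsjt : s + j ≤ t := by omega
      have hc1 : ((t - s - j : ℕ) : ℝ) = (t:ℝ) - s - j := by
        have h' : t - s - j = t - (s + j) := by omega
        rw [h']
        push_cast [hsjt]
        ring
      have hc2 : ((t - j : ℕ) : ℝ) = (t:ℝ) - j := by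
        push_cast [le_of_lt hjt]
        ring
      rw [hc1, hc2]
      have hdpos : (0:ℝ) < (t:ℝ) - j := by
        have : (j:ℝ) < t := by exact_mod_cast hjt
        linarith
      have h1 : ((t:ℝ) - s - j) / ((t:ℝ) - j) ≤ 1 - (s:ℝ)/t := by
        rw [div_le_iff₀ hdpos]
        have hexp : (1 - (s:ℝ)/t) * ((t:ℝ) - j) = (t:ℝ) - s - j + ((s:ℝ)*j)/(t:ℝ) := by
          field_simp
          ring
        rw [hexp]
        have : (0:ℝ) ≤ ((s:ℝ)*j)/(t:ℝ) := by positivity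
        linarith
      have h2 : 1 - (s:ℝ)/t ≤ Real.exp (-((s:ℝ)/t)) := by
        have := Real.add_one_le_exp (-((s:ℝ)/t))
        linarith
      linarith
    have hnn : ∀ j ∈ Finset.range s, (0:ℝ) ≤ (((t - s - j : ℕ) : ℝ) / ((t - j : ℕ) : ℝ)) := by
      intro j _; positivity
    calc G 0 = ∏ j ∈ Finset.range s, (((t - s - j : ℕ) : ℝ) / ((t - j : ℕ) : ℝ)) := hprod
    _ ≤ ∏ _j ∈ Finset.range s, Real.exp (-((s:ℝ)/t)) :=
        Finset.prod_le_prod hnn hfactor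
    _ = Real.exp (-((s:ℝ)/t)) ^ s := by rw [Finset.prod_const, Finset.card_range]
    _ = Real.exp (s * -((s:ℝ)/t)) := (Real.exp_nat_mul _ s).symm
    _ ≤ Real.exp (-(1 - 1 / R) ^ 2) := by
        apply Real.exp_le_exp.mpr
        have hsq : (1 - 1 / R) ^ 2 = (R - 1)^2 / t := by
          rw [← hRt]
          have hRne : R ≠ 0 := by linarith
          field_simp
        rw [hsq]
        have h1 : (R - 1)^2 ≤ (s:ℝ)^2 := by
          apply pow_le_pow_left₀ (by linarith)
          linarith
        have h2 : (R - 1)^2 / t ≤ (s:ℝ)^2 / t := by gcongr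
        have h3 : (s:ℝ) * -((s:ℝ)/t) = -((s:ℝ)^2/t) := by ring
        rw [h3]
        linarith
  -- Part (b)
  have hb : ∀ i : ℕ, 1 ≤ i → i ≤ s →
      G i / G (i - 1) = ((s - i + 1 : ℕ) : ℝ) ^ 2 / ((t - 2 * s + i : ℕ) : ℝ) ∧
      G i / G (i - 1) ≤ Real.exp (2 / (R - 1)) := by
    intro i hi1 his
    have e1 : s - (i - 1) = (s - i) + 1 := by omega
    have e2 : t - 2 * s + i = (t - 2 * s + (i - 1)) + 1 := by omega
    have e3 : s - i + 1 = (s - i) + 1 := rfl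
    have heq : G i / G (i - 1) = ((s - i + 1 : ℕ) : ℝ) ^ 2 / ((t - 2 * s + i : ℕ) : ℝ) := by
      rw [hG i, hG (i - 1), e1, e2, e3, Nat.factorial_succ, Nat.factorial_succ]
      have p1 : ((s.factorial : ℝ)) * (((t - s).factorial : ℝ)) ≠ 0 := by positivity
      have p3 : ((t.factorial : ℝ)) ≠ 0 := by positivity
      have p4 : (((s - i).factorial : ℝ)) ≠ 0 := by positivity
      have p5 : (((t - 2*s + (i-1)).factorial : ℝ)) ≠ 0 := by positivity
      have p6 : (((s - i : ℕ)) : ℝ) + 1 ≠ 0 := by positivity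
      have p7 : (((t - 2*s : ℕ)) : ℝ) + (((i - 1 : ℕ)) : ℝ) + 1 ≠ 0 := by positivity
      push_cast
      exact aux_div2 _ _ _ _ _ _ p1 p3 p4 p5 p6 p7
    refine ⟨heq, ?_⟩
    rw [heq]
    have hnum : (((s - i + 1 : ℕ)) : ℝ) ≤ (s : ℝ) := by
      exact_mod_cast Nat.cast_le.mpr (show s - i + 1 ≤ s by omega)
    have hnumnn : (0:ℝ) ≤ ((s - i + 1 : ℕ) : ℝ) := by positivity
    have hden : (R - 1)^2 ≤ ((t - 2 * s + i : ℕ) : ℝ) := by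
      have hc : ((t - 2 * s + i : ℕ) : ℝ) = (t:ℝ) - 2*s + i := by
        push_cast [h2st]
        ring
      rw [hc]
      have hi1' : (1:ℝ) ≤ (i:ℝ) := by exact_mod_cast hi1
      nlinarith
    calc ((s - i + 1 : ℕ) : ℝ) ^ 2 / ((t - 2 * s + i : ℕ) : ℝ)
        ≤ (t : ℝ) / (R - 1)^2 := by
          apply div_le_div₀ (by positivity) _ (by positivity) hden
          calc ((s - i + 1 : ℕ) : ℝ) ^ 2 ≤ (s:ℝ)^2 := by
                exact pow_le_pow_left₀ hnumnn hnum 2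
          _ ≤ (t:ℝ) := hsq2
    _ = (1 + 1/(R-1))^2 := by
          rw [← hRt]
          field_simp
          ring
    _ ≤ Real.exp (1/(R-1)) ^ 2 := by
          apply pow_le_pow_left₀ (by positivity)
          have := Real.add_one_le_exp (1/(R-1))
          linarith
    _ = Real.exp (2 / (R - 1)) := by
          rw [sq, ← Real.exp_add]
          congr 1
          ring
  refine ⟨ha, hb, ?_⟩
  -- Part (c)
  intro i
  induction i with
  | zero =>
    intro _
    simpa using ha
  | succ n ih =>
    intro h
    have hn : n ≤ s := by omega
    have hbn := hb (n + 1) (by omega) h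
    have hGn : G n ≠ 0 := ne_of_gt (hGpos n)
    have hkey : G (n + 1) = (G (n + 1) / G n) * G n := by
      field_simp
    rw [hkey]
    have h1 : G (n + 1) / G n ≤ Real.exp (2 / (R - 1)) := by
      simpa using hbn.2
    have h2 : G n ≤ Real.exp (-(1 - 1 / R) ^ 2 + 2 * n / (R - 1)) := ih hn
    calc (G (n + 1) / G n) * G n
        ≤ Real.exp (2 / (R - 1)) * Real.exp (-(1 - 1 / R) ^ 2 + 2 * n / (R - 1)) := by
          apply mul_le_mul h1 h2 (le_of_lt (hGpos n)) (le_of_lt (Real.exp_pos _))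
    _ = Real.exp (-(1 - 1 / R) ^ 2 + 2 * (n + 1 : ℕ) / (R - 1)) := by
          rw [← Real.exp_add]
          congr 1
          push_cast
          field_simp
          ring
end

section
/- Let s < m be indices in {1,…,d}, and let δ, w > 0 satisfy μ_m² ≥ δ²μ_s and δ ≤ w ≤ √μ_s. Define θ* ∈ ℝ^d by θ*_s := √μ_s − w and θ*_j := 0 for j ≠ s. Then every vector θ ∈ ℝ^d with θ_s = θ*_s, θ_i = 0 for all i > m, and |θ_i| ≤ δ/√(m−1) for each i ∈ {1,…,m} \ {s}, belongs to the ellipse ℰ; consequently the recentered set ℰ_{θ*} contains an (m−1)-dimensional ℓ_∞-ball of radius δ/√(m−1) centered at 0, so that b_{m−2,∞}(ℰ_{θ*}) ≥ δ/√(m−1). -/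
open MeasureTheory ProbabilityTheory Metric Set
open scoped ENNReal NNReal

noncomputable section

open EllipseTest in
/-- Inscribing an ℓ∞-ball into the recentered ellipse at an extremal θ*: if μ_m² ≥ δ²μ_s
and δ ≤ w ≤ √μ_s, then every vector agreeing with θ* at coordinate s, vanishing beyond m,
and with the other coordinates bounded by δ/√(m−1) lies in ℰ; consequently
b_{m−2,∞}(ℰ_{θ*}) ≥ δ/√(m−1). -/
theorem stmt19 (d : ℕ) (hd : 1 ≤ d) (μ : ℕ → ℝ)
    (hμpos : ∀ i, 1 ≤ i → i ≤ d → 0 < μ i)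
    (hμmono : ∀ i j, 1 ≤ i → i ≤ j → j ≤ d → μ j ≤ μ i)
    (s m : ℕ) (hs1 : 1 ≤ s) (hsm : s < m) (hmd : m ≤ d)
    (δ w : ℝ) (hδ : 0 < δ) (hw0 : 0 < w)
    (hcond : δ ^ 2 * μ s ≤ μ m ^ 2)
    (hδw : δ ≤ w) (hws : w ≤ Real.sqrt (μ s))
    (θstar : E d)
    (hθs : ∀ j : Fin d, j.1 + 1 = s → θstar j = Real.sqrt (μ s) - w)
    (hθ0 : ∀ j : Fin d, j.1 + 1 ≠ s → θstar j = 0) :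
    (∀ θ : E d,
      (∀ j : Fin d, j.1 + 1 = s → θ j = θstar j) →
      (∀ j : Fin d, m < j.1 + 1 → θ j = 0) →
      (∀ j : Fin d, j.1 + 1 ≤ m → j.1 + 1 ≠ s →
        |θ j| ≤ δ / Real.sqrt ((m : ℝ) - 1)) →
      θ ∈ ellipse d μ) ∧
    δ / Real.sqrt ((m : ℝ) - 1) ≤ bernInf d (m - 2) (ellRe d μ θstar) := by
  classical
  have hm2 : 2 ≤ m := by omega
  have hμs : 0 < μ s := hμpos s hs1 (by omega)
  have hμm : 0 < μ m := hμpos m (by omega) hmd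
  have ha : 0 < Real.sqrt (μ s) := Real.sqrt_pos.2 hμs
  have ha2 : Real.sqrt (μ s) ^ 2 = μ s := Real.sq_sqrt hμs.le
  have hδa : δ * Real.sqrt (μ s) ≤ μ m := by nlinarith
  have hkey : (Real.sqrt (μ s) - w) ^ 2 / μ s + δ ^ 2 / μ m ≤ 1 := by
    rw [div_add_div _ _ (ne_of_gt hμs) (ne_of_gt hμm), div_le_one (by positivity)]
    have h1 : 0 ≤ w * μ m * (Real.sqrt (μ s) - w) :=
      mul_nonneg (mul_nonneg hw0.le hμm.le) (sub_nonneg.2 hws)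
    have h2 : 0 ≤ Real.sqrt (μ s) * ((w - δ) * μ m) :=
      mul_nonneg ha.le (mul_nonneg (sub_nonneg.2 hδw) hμm.le)
    have h3 : 0 ≤ Real.sqrt (μ s) * (δ * (μ m - δ * Real.sqrt (μ s))) :=
      mul_nonneg ha.le (mul_nonneg hδ.le (sub_nonneg.2 hδa))
    nlinarith [h1, h2, h3, ha2]
  have hm1 : (0:ℝ) < (m:ℝ) - 1 := by
    have : (2:ℝ) ≤ (m:ℝ) := by exact_mod_cast hm2
    linarith
  set r₀ : ℝ := δ / Real.sqrt ((m : ℝ) - 1) with hr₀def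
  have hr₀pos : 0 < r₀ := div_pos hδ (Real.sqrt_pos.2 hm1)
  have hr₀sq : r₀ ^ 2 = δ ^ 2 / ((m:ℝ) - 1) := by
    rw [hr₀def, div_pow, Real.sq_sqrt hm1.le]
  set s₀ : Fin d := ⟨s - 1, by omega⟩ with hs₀def
  have hs₀s : s₀.1 + 1 = s := by simp [hs₀def]; omega
  have hjs : ∀ j : Fin d, j.1 + 1 = s ↔ j = s₀ := by
    intro j
    constructor
    · intro h; apply Fin.ext; simp [hs₀def]; omega
    · intro h; rw [h]; exact hs₀s
  -- the index finset
  set A : Finset (Fin d) :=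
    (Finset.univ.filter (fun i : Fin d => i.1 < m)).erase s₀ with hAdef
  have hmemA : ∀ i : Fin d, i ∈ A ↔ (i.1 + 1 ≤ m ∧ i.1 + 1 ≠ s) := by
    intro i
    rw [hAdef, Finset.mem_erase, Finset.mem_filter]
    constructor
    · rintro ⟨h1, _, h2⟩
      exact ⟨by omega, fun h => h1 ((hjs i).1 h)⟩
    · rintro ⟨h1, h2⟩
      refine ⟨fun h => h2 ?_, Finset.mem_univ i, by omega⟩
      rw [h]; exact hs₀s
  have hs₀filter : s₀ ∈ Finset.univ.filter (fun i : Fin d => i.1 < m) := by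
    rw [Finset.mem_filter]; exact ⟨Finset.mem_univ _, by simp [hs₀def]; omega⟩
  have hcardfilter : (Finset.univ.filter (fun i : Fin d => i.1 < m)).card = m := by
    have h : (Finset.univ.filter (fun i : Fin d => i.1 < m)) =
        Finset.map (Fin.castLEEmb hmd) Finset.univ := by
      ext i
      simp only [Finset.mem_filter, Finset.mem_univ, true_and, Finset.mem_map,
        Fin.castLEEmb_apply]
      constructor
      · intro h; exact ⟨⟨i.1, h⟩, rfl⟩
      · rintro ⟨j, rfl⟩; exact j.2
    rw [h, Finset.card_map, Finset.card_univ, Fintype.card_fin]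
  have hcardA : A.card = m - 1 := by
    rw [hAdef, Finset.card_erase_of_mem hs₀filter, hcardfilter]
  -- Part 1
  have hmain : ∀ θ : E d,
      (∀ j : Fin d, j.1 + 1 = s → θ j = θstar j) →
      (∀ j : Fin d, m < j.1 + 1 → θ j = 0) →
      (∀ j : Fin d, j.1 + 1 ≤ m → j.1 + 1 ≠ s → |θ j| ≤ r₀) →
      θ ∈ ellipse d μ := by
    intro θ h1 h2 h3
    show ∑ i, θ i ^ 2 / μ (i.1 + 1) ≤ 1
    rw [← Finset.add_sum_erase Finset.univ _ (Finset.mem_univ s₀)]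
    have hterm1 : θ s₀ ^ 2 / μ (s₀.1 + 1) = (Real.sqrt (μ s) - w) ^ 2 / μ s := by
      rw [hs₀s, h1 s₀ hs₀s, hθs s₀ hs₀s]
    have hc : (0:ℝ) < δ ^ 2 / (((m:ℝ) - 1) * μ m) := by positivity
    have hrest : ∑ i ∈ Finset.univ.erase s₀, θ i ^ 2 / μ (i.1 + 1) ≤ δ ^ 2 / μ m := by
      have hle : ∑ i ∈ Finset.univ.erase s₀, θ i ^ 2 / μ (i.1 + 1) ≤
          ∑ i ∈ Finset.univ.erase s₀,
            (if i.1 < m then δ ^ 2 / (((m:ℝ) - 1) * μ m) else 0) := by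
        apply Finset.sum_le_sum
        intro i hi
        have his : i.1 + 1 ≠ s := by
          rw [Finset.mem_erase] at hi
          exact fun h => hi.1 ((hjs i).1 h)
        by_cases him : i.1 < m
        · rw [if_pos him]
          have hμi : 0 < μ (i.1 + 1) := hμpos _ (by omega) (by omega)
          have hμim : μ m ≤ μ (i.1 + 1) := hμmono _ _ (by omega) (by omega) hmd
          have habs : |θ i| ≤ r₀ := h3 i (by omega) his
          have hsq : θ i ^ 2 ≤ δ ^ 2 / ((m:ℝ) - 1) := by
            rw [← hr₀sq]
            calc θ i ^ 2 = |θ i| ^ 2 := (sq_abs _).symm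
            _ ≤ r₀ ^ 2 := by nlinarith [abs_nonneg (θ i)]
          calc θ i ^ 2 / μ (i.1 + 1) ≤ (δ ^ 2 / ((m:ℝ) - 1)) / μ m :=
                div_le_div₀ (by positivity) hsq hμm hμim
            _ = δ ^ 2 / (((m:ℝ) - 1) * μ m) := by rw [div_div]
        · rw [if_neg him, h2 i (by omega)]
          simp
      refine hle.trans ?_
      rw [Finset.sum_ite, Finset.sum_const, Finset.sum_const_zero, add_zero]
      have hfe : (Finset.univ.erase s₀).filter (fun i : Fin d => i.1 < m) = A := by
        rw [hAdef, Finset.filter_erase]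
      rw [hfe, hcardA, nsmul_eq_mul]
      have hcast : ((m - 1 : ℕ) : ℝ) = (m:ℝ) - 1 := by
        have : (1:ℕ) ≤ m := by omega
        push_cast [this]; ring
      rw [hcast]
      have heq : ((m:ℝ) - 1) * (δ ^ 2 / (((m:ℝ) - 1) * μ m)) = δ ^ 2 / μ m := by
        field_simp
      exact le_of_eq heq
    calc θ s₀ ^ 2 / μ (s₀.1 + 1) + ∑ i ∈ Finset.univ.erase s₀, θ i ^ 2 / μ (i.1 + 1)
        ≤ (Real.sqrt (μ s) - w) ^ 2 / μ s + δ ^ 2 / μ m := by rw [hterm1]; linarith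
      _ ≤ 1 := hkey
  refine ⟨fun θ h1 h2 h3 => hmain θ h1 h2 h3, ?_⟩
  -- Part 2
  -- linear independence / span setup
  have hsingle_inj : Function.Injective (fun i : Fin d => EuclideanSpace.single i (1:ℝ)) := by
    intro i j h
    by_contra hne
    have h' : (EuclideanSpace.single i (1:ℝ) : E d) = EuclideanSpace.single j (1:ℝ) := h
    have h2 : (EuclideanSpace.single i (1:ℝ) : E d) i =
        (EuclideanSpace.single j (1:ℝ) : E d) i := by rw [h']
    rw [EuclideanSpace.single_apply, EuclideanSpace.single_apply,
      if_pos rfl, if_neg hne] at h2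
    exact one_ne_zero h2
  have hLI : LinearIndependent ℝ (fun i : Fin d => EuclideanSpace.single i (1:ℝ)) := by
    have h := (EuclideanSpace.basisFun (Fin d) ℝ).toBasis.linearIndependent
    have e : ⇑(EuclideanSpace.basisFun (Fin d) ℝ).toBasis =
        fun i : Fin d => EuclideanSpace.single i (1:ℝ):= by
      funext i
      rw [OrthonormalBasis.coe_toBasis, EuclideanSpace.basisFun_apply]
    rwa [e] at h
  set B : Finset (E d) := A.image (fun i => EuclideanSpace.single i (1:ℝ)) with hBdef
  set S : Submodule ℝ (E d) := Submodule.span ℝ (B : Set (E d)) with hSdef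
  have hfinrank : Module.finrank ℝ S = m - 2 + 1 := by
    rw [hSdef, finrank_span_finset_eq_card, hBdef,
      Finset.card_image_of_injective _ hsingle_inj, hcardA]
    · omega
    · apply hLI.linearIndepOn_id.mono
      intro x hx
      rw [hBdef] at hx
      obtain ⟨i, -, rfl⟩ := Finset.mem_image.1 (Finset.mem_coe.1 hx)
      exact Set.mem_range_self i
  -- elements of S vanish outside A
  have hvanish : ∀ u ∈ S, ∀ j : Fin d, j ∉ A → u j = 0 := by
    set S' : Submodule ℝ (E d) :=
      { carrier := {u : E d | ∀ j : Fin d, j ∉ A → u j = 0}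
        add_mem' := by
          intro a b haa hbb j hj
          have : (a + b) j = a j + b j := rfl
          rw [this, haa j hj, hbb j hj, add_zero]
        zero_mem' := by intro j hj; rfl
        smul_mem' := by
          intro c x hx j hj
          have : (c • x) j = c * x j := rfl
          rw [this, hx j hj, mul_zero] } with hS'def
    intro u hu j hj
    have hle : S ≤ S' := by
      rw [hSdef]
      apply Submodule.span_le.2
      intro x hx
      rw [hBdef] at hx
      obtain ⟨i, hi, rfl⟩ := Finset.mem_image.1 (Finset.mem_coe.1 hx)
      intro k hk
      have hki : k ≠ i := fun h => hk (h ▸ hi)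
      show EuclideanSpace.single i (1:ℝ) k = 0
      rw [EuclideanSpace.single_apply, if_neg hki]
    exact hle hu j hj
  -- membership of r₀ in the Bernstein set
  have hmem : r₀ ∈ {r : ℝ | 0 ≤ r ∧ ∃ S : Submodule ℝ (E d),
      Module.finrank ℝ S = (m - 2) + 1 ∧
      ∀ u ∈ S, (∀ i, |u i| ≤ r) → u ∈ ellRe d μ θstar} := by
    refine ⟨hr₀pos.le, S, hfinrank, ?_⟩
    intro u hu hub
    have huA := hvanish u hu
    refine ⟨u + θstar, ?_, add_sub_cancel_right u θstar⟩
    apply hmain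
    · intro j hjs'
      have : j = s₀ := (hjs j).1 hjs'
      have hjA : j ∉ A := by
        rw [hmemA]; push_neg; intro _; rw [this, hs₀s]
      show u j + θstar j = θstar j
      rw [huA j hjA, zero_add]
    · intro j hjm
      have hjA : j ∉ A := by rw [hmemA]; push_neg; intro h; omega
      show u j + θstar j = 0
      rw [huA j hjA, hθ0 j (by omega), add_zero]
    · intro j hjm hjs'
      have hjA : j ∈ A := (hmemA j).2 ⟨hjm, hjs'⟩
      show |u j + θstar j| ≤ r₀
      rw [hθ0 j hjs', add_zero]
      exact hub j
  -- boundedness above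
  have hμ1 : 0 < μ 1 := hμpos 1 le_rfl hd
  have hbdd : BddAbove {r : ℝ | 0 ≤ r ∧ ∃ S : Submodule ℝ (E d),
      Module.finrank ℝ S = (m - 2) + 1 ∧
      ∀ u ∈ S, (∀ i, |u i| ≤ r) → u ∈ ellRe d μ θstar} := by
    refine ⟨2 * Real.sqrt (μ 1), ?_⟩
    rintro r ⟨hr0, T, hT, hTprop⟩
    -- coordinatewise bound on ellRe
    have hcoord : ∀ v ∈ ellRe d μ θstar, ∀ i : Fin d, |v i| ≤ 2 * Real.sqrt (μ 1) := by
      rintro v ⟨θ, hθ, rfl⟩ i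
      have hθi : |θ i| ≤ Real.sqrt (μ 1) := by
        have hμi : 0 < μ (i.1 + 1) := hμpos _ (by omega) (by omega)
        have hsingle : θ i ^ 2 / μ (i.1 + 1) ≤ 1 := by
          refine le_trans (Finset.single_le_sum (f := fun i : Fin d => θ i ^ 2 / μ (i.1+1))
            (fun j _ => div_nonneg (sq_nonneg _) (hμpos _ (by omega) (by omega)).le)
            (Finset.mem_univ i)) hθ
        have h1 : θ i ^ 2 ≤ μ (i.1 + 1) := by
          rw [div_le_one hμi] at hsingle; exact hsingle
        have h2 : μ (i.1 + 1) ≤ μ 1 := hμmono 1 _ le_rfl (by omega) (by omega)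
        calc |θ i| = Real.sqrt (θ i ^ 2) := by rw [Real.sqrt_sq_eq_abs]
          _ ≤ Real.sqrt (μ 1) := Real.sqrt_le_sqrt (by linarith)
      have hθsi : |θstar i| ≤ Real.sqrt (μ 1) := by
        by_cases hi : i.1 + 1 = s
        · rw [hθs i hi]
          have h2 : μ s ≤ μ 1 := hμmono 1 s le_rfl hs1 (by omega)
          have h3 : Real.sqrt (μ s) ≤ Real.sqrt (μ 1) := Real.sqrt_le_sqrt h2
          rw [abs_le]
          constructor <;> [linarith [Real.sqrt_nonneg (μ 1)]; linarith]
        · rw [hθ0 i hi]; simp [Real.sqrt_nonneg]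
      show |θ i - θstar i| ≤ 2 * Real.sqrt (μ 1)
      calc |θ i - θstar i| ≤ |θ i| + |θstar i| := abs_sub _ _
        _ ≤ 2 * Real.sqrt (μ 1) := by linarith
    -- pick a nonzero element of T
    have hTne : T ≠ ⊥ := by
      intro h
      rw [h, finrank_bot] at hT
      omega
    obtain ⟨v, hvT, hvne⟩ := Submodule.exists_mem_ne_zero_of_ne_bot hTne
    have hdne : (Finset.univ : Finset (Fin d)).Nonempty := by
      rw [Finset.univ_nonempty_iff]
      exact ⟨⟨0, by omega⟩⟩
    obtain ⟨i₀, _, hi₀⟩ := Finset.exists_max_image Finset.univ (fun i => |v i|) hdne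
    have hMpos : 0 < |v i₀| := by
      by_contra hM
      push_neg at hM
      apply hvne
      ext j
      have := hi₀ j (Finset.mem_univ j)
      have : |v j| = 0 := le_antisymm (by linarith) (abs_nonneg _)
      exact abs_eq_zero.1 this
    set M := |v i₀|
    set u : E d := (r / M) • v with hudef
    have huT : u ∈ T := T.smul_mem _ hvT
    have hub : ∀ i, |u i| ≤ r := by
      intro i
      have : u i = (r / M) * v i := rfl
      rw [this, abs_mul, abs_div, abs_of_nonneg hr0, abs_of_pos hMpos]
      calc r / M * |v i| ≤ r / M * M := by
            apply mul_le_mul_of_nonneg_left (hi₀ i (Finset.mem_univ i)) (by positivity)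
        _ = r := div_mul_cancel₀ r hMpos.ne'
    have hur : |u i₀| = r := by
      have : u i₀ = (r / M) * v i₀ := rfl
      rw [this, abs_mul, abs_div, abs_of_nonneg hr0, abs_of_pos hMpos,
        div_mul_cancel₀ r hMpos.ne']
    have := hcoord u (hTprop u huT hub) i₀
    rw [hur] at this
    exact this
  exact le_csSup hbdd hmem
end
end
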